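/- arXiv:2312.14143 — 7 statements merged into one kernel-verified Lean document; each statement's English description precedes it below -/
import Mathlib

section
/- Fix a real R ≥ 1, an integer j ≥ 1, and a value κ* of the w-mesoscopic coarsening attained on {k ∈ 𝔎_M : τ₁(k) ≤ R·M}. Then the random variable given by the maximum, over k ∈ 𝔎_M with τ₁(k) ≤ R·M whose w-mesoscopic coarsening equals κ*, of Σ_{i=1}^M Z^j_{i,k_{i−1},k_i}, is stochastically dominated by 2^{j+1}·B, where B is a Binomial(M, p) random variable with p = min(1, 8·w³·C₁·exp(−C₂·2^{jβ})); that is, for every real t, ℙ( max_{k : τ₁(k) ≤ RM, coarsening(k) = κ*} Σ_{i=1}^M Z^j_{i,k_{i−1},k_i} ≥ 2^{j+1}·t ) ≤ ℙ(B ≥ t). -/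
open MeasureTheory ProbabilityTheory Real
open scoped ProbabilityTheory Classical

/-- `τ₁(k) = ∑_{i=1}^M |k_i − k_{i−1}|` for `k ∈ ℤ^{M+1}`. -/
def tau1 {M : ℕ} (k : Fin (M + 1) → ℤ) : ℤ :=
  ∑ i : Fin M, |k i.succ - k i.castSucc|

/-- `Z^j` truncation: `Z^j = 2^{j+1}·1{2^j ≤ Z ≤ 2^{j+1}}`. -/
noncomputable def Zdyad (j : ℤ) (x : ℝ) : ℝ :=
  if (2 : ℝ) ^ j ≤ x ∧ x ≤ (2 : ℝ) ^ (j + 1) then (2 : ℝ) ^ (j + 1) else 0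

/-- The `w`-mesoscopic coarsening of `k ∈ ℤ^{M+1}`. -/
noncomputable def mesoCoarsen (M w : ℕ) (k : Fin (M + 1) → ℤ) :
    (Fin (M / w) → ℤ) × Set (Fin M) × (Fin (M + 1) → Option ℤ) :=
  ⟨fun i => Int.fdiv
      (k ⟨(i.1 + 1) * w,
        Nat.lt_succ_of_le ((Nat.mul_le_mul_right w (Nat.succ_le_of_lt i.isLt)).trans
          (Nat.div_mul_le_self M w))⟩) ((w : ℤ) ^ 2),
    {i : Fin M | (w : ℤ) ≤ |k i.succ - k i.castSucc|},
    fun p => if ∃ j : Fin M, (w : ℤ) ≤ |k j.succ - k j.castSucc| ∧ (j.succ = p ∨ j.castSucc = p)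
      then some (k p) else none⟩

/-- The upper tail `ℙ(B ≥ t)` of a `Binomial(M, p)` random variable `B`. -/
noncomputable def binomTail (M : ℕ) (p t : ℝ) : ℝ :=
  ∑ m ∈ Finset.range (M + 1),
    if t ≤ (m : ℝ) then (M.choose m : ℝ) * p ^ m * (1 - p) ^ (M - m) else 0

/-!
A path `k` with coarsening `κ*` collects the reward `2^{j+1}` at step `i` only if
`Z_{i,k_{i-1},k_i} ≥ 2^j`, and the coarsening confines the pair `(k_{i-1}, k_i)` to at most `8w³`
values. Indeed, both ends of a large step are recorded; otherwise the step is shorter than `w`, and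
`k_{i-1}` is within `(w-1)²` of the last recorded endpoint of a large step in the current block of
length `w`, or, if there is none, of the block start `k_{w⌊(i-1)/w⌋}`, which the coarsening knows
up to `w²`. So any two admissible values of `k_{i-1}` differ by less than `3w²`, and they lie in a
window of `3w²` integers. Hence the maximum is at most `2^{j+1}` times the number of steps `i` at
which one of these `8w³` variables exceeds `2^j`. These events are independent, each has
probability at most `p` by a union bound, and the number of occurrences of independent events of
probability at most `p` is stochastically dominated by `Binomial(M, p)`.
-/

theorem binomTail_nonneg {p : ℝ} (hp0 : 0 ≤ p) (hp1 : p ≤ 1) (n : ℕ) (t : ℝ) :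
    0 ≤ binomTail n p t :=
  Finset.sum_nonneg fun m _ => by
    split_ifs
    · have : 0 ≤ 1 - p := by linarith
      positivity
    · exact le_rfl

theorem binomTail_zero (p t : ℝ) : binomTail 0 p t = if t ≤ 0 then 1 else 0 := by
  simp [binomTail]

theorem binomTail_succ (n : ℕ) (p t : ℝ) :
    binomTail (n + 1) p t = p * binomTail n p (t - 1) + (1 - p) * binomTail n p t := by
  let f : ℝ → ℕ → ℕ → ℝ := fun t i j => if t ≤ (i : ℝ) then p ^ i * (1 - p) ^ j else 0
  have hf : ∀ (t : ℝ) (m i : ℕ),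
      (if t ≤ (i : ℝ) then (m.choose i : ℝ) * p ^ i * (1 - p) ^ (m - i) else 0) =
        m.choose i * f t i (m - i) := fun t m i => by
    simp only [f]
    split_ifs <;> ring
  simp only [binomTail, hf, Finset.mul_sum]
  rw [Finset.sum_choose_succ_mul (f t),
    add_comm (∑ i ∈ Finset.range (n + 1), (n.choose i : ℝ) * f t i (n + 1 - i))]
  congr 1 <;> refine Finset.sum_congr rfl fun i hi => ?_ <;> simp only [f]
  · simp only [Nat.cast_succ, sub_le_iff_le_add]
    split_ifs <;> ring
  · rw [Nat.succ_sub (Finset.mem_range_succ_iff.1 hi), pow_succ]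
    split_ifs <;> ring

theorem iIndep.iIndepSet_of_measurableSet {ι Ω : Type*} [MeasurableSpace Ω] {μ : Measure Ω}
    {m : ι → MeasurableSpace Ω} (hindep : iIndep m μ) {B : ι → Set Ω}
    (hB : ∀ i, MeasurableSet[m i] (B i)) : iIndepSet B μ :=
  (iIndepSet_iff_iIndep _ _).2 <| iIndep_of_iIndep_of_le hindep fun i =>
    MeasurableSpace.generateFrom_le fun _ h => h ▸ hB i

theorem iIndepSet.indep_comap_sum_indicator {ι Ω : Type*} [MeasurableSpace Ω] {μ : Measure Ω}
    {B : ι → Set Ω} (hB : ∀ i, MeasurableSet (B i)) (hindep : iIndepSet B μ) {a : ι}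
    {s : Finset ι} (ha : a ∉ s) :
    Indep (MeasurableSpace.generateFrom {B a})
      (MeasurableSpace.comap (fun ω => ∑ i ∈ s, (B i).indicator (1 : Ω → ℝ) ω) inferInstance)
      μ := by
  let m : ι → MeasurableSpace Ω := fun i => MeasurableSpace.generateFrom {B i}
  have hm : ∀ i, m i ≤ ‹MeasurableSpace Ω› := fun i =>
    MeasurableSpace.generateFrom_le fun _ h => h ▸ hB i
  have hsum : Measurable[⨆ i ∈ s, m i] fun ω => ∑ i ∈ s, (B i).indicator (1 : Ω → ℝ) ω :=
    Finset.measurable_sum s fun i hi =>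
      (measurable_const.indicator
        (MeasurableSpace.measurableSet_generateFrom (Set.mem_singleton (B i)))).mono
        (le_iSup₂ (f := fun i _ => m i) i hi) le_rfl
  simpa only [Set.mem_singleton_iff, iSup_iSup_eq_left, Finset.mem_coe] using
    indep_of_indep_of_le_right (indep_iSup_of_disjoint hm ((iIndepSet_iff_iIndep _ _).1 hindep)
      (Set.disjoint_singleton_left.2 ha)) hsum.comap_le

theorem measureReal_le_sum_indicator_le_binomTail {ι Ω : Type*} [MeasurableSpace Ω]
    {μ : Measure Ω} {B : ι → Set Ω} (hB : ∀ i, MeasurableSet (B i)) (hindep : iIndepSet B μ)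
    {p : ℝ} (hp0 : 0 ≤ p) (hp1 : p ≤ 1) (hpB : ∀ i, μ.real (B i) ≤ p) (s : Finset ι) (t : ℝ) :
    μ.real {ω | t ≤ ∑ i ∈ s, (B i).indicator 1 ω} ≤ binomTail s.card p t := by
  have := hindep.isProbabilityMeasure
  induction s using Finset.induction_on generalizing t with
  | empty =>
    rw [Finset.card_empty, binomTail_zero]
    split_ifs with ht
    · exact measureReal_le_one
    · simp [ht]
  | @insert a s ha ih =>
    set Y : Ω → ℝ := fun ω => ∑ i ∈ s, (B i).indicator 1 ω
    have hmul : ∀ F, MeasurableSet[MeasurableSpace.generateFrom {B a}] F → ∀ u : ℝ,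
        μ.real (F ∩ {ω | u ≤ Y ω}) = μ.real F * μ.real {ω | u ≤ Y ω} := fun F hF u => by
      rw [measureReal_def, measureReal_def, measureReal_def, ← ENNReal.toReal_mul]
      exact congrArg ENNReal.toReal <| (Indep_iff _ _ _).1
        (iIndepSet.indep_comap_sum_indicator hB hindep ha) F (Y ⁻¹' Set.Ici u) hF
        ⟨_, measurableSet_Ici, rfl⟩
    have hBa : MeasurableSet[MeasurableSpace.generateFrom {B a}] (B a) :=
      MeasurableSpace.measurableSet_generateFrom rfl
    have hsplit : {ω | t ≤ ∑ i ∈ insert a s, (B i).indicator 1 ω} =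
        B a ∩ {ω | t - 1 ≤ Y ω} ∪ (B a)ᶜ ∩ {ω | t ≤ Y ω} := by
      ext ω
      by_cases hω : ω ∈ B a <;> simp [Finset.sum_insert ha, hω, Y, add_comm]
    have hmono : μ.real {ω | t ≤ Y ω} ≤ μ.real {ω | t - 1 ≤ Y ω} :=
      measureReal_mono fun ω (h : t ≤ Y ω) => show t - 1 ≤ Y ω by linarith
    have hp1' : 0 ≤ 1 - p := by linarith
    calc μ.real {ω | t ≤ ∑ i ∈ insert a s, (B i).indicator 1 ω}
        ≤ μ.real (B a ∩ {ω | t - 1 ≤ Y ω}) + μ.real ((B a)ᶜ ∩ {ω | t ≤ Y ω}) := by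
          rw [hsplit]
          exact measureReal_union_le _ _
      _ = μ.real (B a) * μ.real {ω | t - 1 ≤ Y ω} +
            (1 - μ.real (B a)) * μ.real {ω | t ≤ Y ω} := by
          rw [hmul _ hBa, hmul _ hBa.compl, measureReal_compl (hB a), probReal_univ]
      _ ≤ p * μ.real {ω | t - 1 ≤ Y ω} + (1 - p) * μ.real {ω | t ≤ Y ω} := by
          nlinarith [mul_le_mul_of_nonneg_right (hpB a) (sub_nonneg.2 hmono)]
      _ ≤ p * binomTail s.card p (t - 1) + (1 - p) * binomTail s.card p t := by
          gcongr <;> exact ih _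
      _ = binomTail (insert a s).card p t := by
          rw [Finset.card_insert_of_notMem ha, binomTail_succ]

theorem Int.exists_subset_Ico_of_abs_sub_lt {S : Set ℤ} {L : ℤ}
    (h : ∀ x ∈ S, ∀ y ∈ S, |x - y| < L) : ∃ lo, S ⊆ Set.Ico lo (lo + L) := by
  rcases S.eq_empty_or_nonempty with rfl | ⟨y, hy⟩
  · exact ⟨0, Set.empty_subset _⟩
  have hbdd : BddBelow S := ⟨y - L, fun x hx => by linarith [(abs_lt.1 (h x hx y hy)).1]⟩
  refine ⟨sInf S, fun x hx => ⟨csInf_le hbdd hx, ?_⟩⟩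
  linarith [(abs_lt.1 (h x hx _ (Int.csInf_mem ⟨y, hy⟩ hbdd))).2]

theorem Int.abs_sub_lt_of_fdiv_eq_fdiv {x y d : ℤ} (hd : 0 < d) (h : x.fdiv d = y.fdiv d) :
    |x - y| < d := by
  rw [Int.fdiv_eq_ediv_of_nonneg _ hd.le, Int.fdiv_eq_ediv_of_nonneg _ hd.le] at h
  have hx := Int.emod_add_mul_ediv x d
  have hy := Int.emod_add_mul_ediv y d
  rw [h] at hx
  have := Int.emod_nonneg x hd.ne'
  have := Int.emod_lt_of_pos x hd
  have := Int.emod_nonneg y hd.ne'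
  have := Int.emod_lt_of_pos y hd
  rw [abs_lt]
  constructor <;> linarith

theorem abs_sub_le_mul_of_abs_step_le {M : ℕ} (k : Fin (M + 1) → ℤ) {D : ℤ} (b : ℕ) :
    ∀ (d : ℕ) (hbd : b + d ≤ M),
      (∀ i : Fin M, b ≤ i.1 → i.1 < b + d → |k i.succ - k i.castSucc| ≤ D) →
      |k ⟨b + d, by omega⟩ - k ⟨b, by omega⟩| ≤ d * D
  | 0, _, _ => by simp
  | d + 1, hbd, hstep => by
    have hlast := hstep ⟨b + d, by omega⟩ le_self_add (by simp)
    have ih := abs_sub_le_mul_of_abs_step_le k b d (by omega) fun i h₁ h₂ => hstep i h₁ (by omega)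
    calc |k ⟨b + (d + 1), _⟩ - k ⟨b, _⟩|
        ≤ |k ⟨b + d + 1, by omega⟩ - k ⟨b + d, by omega⟩| + |k ⟨b + d, by omega⟩ - k ⟨b, _⟩| :=
          abs_sub_le _ _ _
      _ ≤ D + d * D := add_le_add hlast ih
      _ = (d + 1 : ℕ) * D := by push_cast; ring

section MesoCoarsen

variable {M w : ℕ} {k k' : Fin (M + 1) → ℤ}

theorem mesoCoarsen_large_iff (h : mesoCoarsen M w k = mesoCoarsen M w k') (i : Fin M) :
    (w : ℤ) ≤ |k i.succ - k i.castSucc| ↔ (w : ℤ) ≤ |k' i.succ - k' i.castSucc| :=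
  Set.ext_iff.1 (congrArg (fun κ => κ.2.1) h) i

theorem apply_eq_of_mesoCoarsen_eq_of_large (h : mesoCoarsen M w k = mesoCoarsen M w k')
    {i : Fin M} (hi : (w : ℤ) ≤ |k i.succ - k i.castSucc|) {p : Fin (M + 1)}
    (hp : i.succ = p ∨ i.castSucc = p) : k p = k' p := by
  have hp' := congrFun (congrArg (fun κ => κ.2.2) h) p
  simp only [mesoCoarsen] at hp'
  rw [if_pos ⟨i, hi, hp⟩, if_pos ⟨i, (mesoCoarsen_large_iff h i).1 hi, hp⟩] at hp'
  exact Option.some.inj hp'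

theorem abs_sub_lt_of_mesoCoarsen_eq_of_mul (h : mesoCoarsen M w k = mesoCoarsen M w k')
    (h₀ : k 0 = 0) (h₀' : k' 0 = 0) (hw : 0 < w) {q : ℕ} (hq : q * w ≤ M) :
    |k ⟨q * w, by omega⟩ - k' ⟨q * w, by omega⟩| < (w : ℤ) ^ 2 := by
  rcases q with _ | r
  · rw [show (⟨0 * w, _⟩ : Fin (M + 1)) = 0 from Fin.ext (zero_mul w), h₀, h₀', sub_self,
      abs_zero]
    positivity
  · exact Int.abs_sub_lt_of_fdiv_eq_fdiv (by positivity)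
      (congrFun (congrArg Prod.fst h) ⟨r, (Nat.le_div_iff_mul_le hw).2 hq⟩)

/-- The anchor `b` is one past the last large step in the block `[w⌊a/w⌋, a)`, or the block start
`w⌊a/w⌋` if the block has no large step before `a`. -/
theorem exists_anchor_of_mesoCoarsen_eq (h : mesoCoarsen M w k = mesoCoarsen M w k')
    (h₀ : k 0 = 0) (h₀' : k' 0 = 0) (hw : 0 < w) {a : ℕ} (ha : a ≤ M) :
    ∃ b, ∃ hba : b ≤ a, a < b + w ∧ |k ⟨b, by omega⟩ - k' ⟨b, by omega⟩| < (w : ℤ) ^ 2 ∧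
      ∀ i : Fin M, b ≤ i.1 → i.1 < a → |k i.succ - k i.castSucc| < w := by
  have hc : a / w * w ≤ a := Nat.div_mul_le_self a w
  have hac : a < a / w * w + w := Nat.lt_div_mul_add hw
  let S := Finset.univ.filter fun i : Fin M =>
    a / w * w ≤ i.1 ∧ i.1 < a ∧ (w : ℤ) ≤ |k i.succ - k i.castSucc|
  have hsmall : ∀ b, a / w * w ≤ b → (∀ i ∈ S, i.1 < b) →
      ∀ i : Fin M, b ≤ i.1 → i.1 < a → |k i.succ - k i.castSucc| < w := fun b hcb hS i hbi hia =>
    lt_of_not_ge fun hi =>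
      (hS i (Finset.mem_filter.2 ⟨Finset.mem_univ _, by omega, hia, hi⟩)).not_ge hbi
  rcases S.eq_empty_or_nonempty with hS | hS
  · exact ⟨a / w * w, hc, hac, abs_sub_lt_of_mesoCoarsen_eq_of_mul h h₀ h₀' hw (by omega),
      hsmall _ le_rfl (by simp [hS])⟩
  · obtain ⟨-, hci, hia, hlarge⟩ := Finset.mem_filter.1 (S.max'_mem hS)
    refine ⟨(S.max' hS).1 + 1, hia, by omega, ?_,
      hsmall _ (by omega) fun i hi => Nat.lt_succ_of_le (S.le_max' i hi)⟩
    change |k (S.max' hS).succ - k' (S.max' hS).succ| < _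
    rw [apply_eq_of_mesoCoarsen_eq_of_large h hlarge (Or.inl rfl), sub_self, abs_zero]
    positivity

theorem abs_sub_lt_of_mesoCoarsen_eq (h : mesoCoarsen M w k = mesoCoarsen M w k')
    (h₀ : k 0 = 0) (h₀' : k' 0 = 0) (hw : 0 < w) {a : ℕ} (ha : a ≤ M) :
    |k ⟨a, by omega⟩ - k' ⟨a, by omega⟩| < 3 * (w : ℤ) ^ 2 := by
  obtain ⟨b, hba, haw, hb, hsmall⟩ := exists_anchor_of_mesoCoarsen_eq h h₀ h₀' hw ha
  obtain ⟨d, rfl⟩ := Nat.exists_eq_add_of_le hba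
  have hwalk : ∀ l : Fin (M + 1) → ℤ,
      (∀ i : Fin M, b ≤ i.1 → i.1 < b + d → |l i.succ - l i.castSucc| < w) →
      |l ⟨b + d, by omega⟩ - l ⟨b, by omega⟩| ≤ (w - 1) ^ 2 := fun l hl => by
    have hd : (d : ℤ) ≤ w - 1 := by omega
    calc _ ≤ d * (w - 1 : ℤ) := abs_sub_le_mul_of_abs_step_le l b d ha fun i h₁ h₂ => by
            linarith [hl i h₁ h₂]
      _ ≤ (w - 1) ^ 2 := by rw [sq]; exact mul_le_mul_of_nonneg_right hd (by omega)
  have hk := hwalk k hsmall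
  have hk' := hwalk k' fun i h₁ h₂ =>
    lt_of_not_ge fun hi => (hsmall i h₁ h₂).not_ge ((mesoCoarsen_large_iff h i).2 hi)
  have hsq : ((w : ℤ) - 1) ^ 2 ≤ (w : ℤ) ^ 2 := by nlinarith
  rw [abs_le] at hk hk'
  rw [abs_lt] at hb ⊢
  constructor <;> linarith

noncomputable def windowPairs (lo : ℤ) (w : ℕ) : Finset (ℤ × ℤ) :=
  (Finset.Ico lo (lo + 3 * (w : ℤ) ^ 2) ×ˢ Finset.Ioo (-(w : ℤ)) w).image
    fun q => (q.1, q.1 + q.2)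

theorem card_windowPairs_le (lo : ℤ) (w : ℕ) : (windowPairs lo w).card ≤ 8 * w ^ 3 := by
  have hcard : (lo + 3 * (w : ℤ) ^ 2 - lo).toNat = 3 * w ^ 2 := by
    rw [add_sub_cancel_left, show 3 * (w : ℤ) ^ 2 = ((3 * w ^ 2 : ℕ) : ℤ) by push_cast; ring,
      Int.toNat_natCast]
  calc (windowPairs lo w).card ≤ _ := Finset.card_image_le
    _ = 3 * w ^ 2 * (2 * w - 1) := by
        rw [Finset.card_product, Int.card_Ico, Int.card_Ioo, hcard]
        congr 1
        omega
    _ ≤ 3 * w ^ 2 * (2 * w) := Nat.mul_le_mul_left _ (Nat.sub_le _ _)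
    _ ≤ 8 * w ^ 3 := by nlinarith

theorem mem_windowPairs {lo x y : ℤ} {w : ℕ} (hx : x ∈ Set.Ico lo (lo + 3 * (w : ℤ) ^ 2))
    (hxy : |y - x| < w) : (x, y) ∈ windowPairs lo w :=
  Finset.mem_image.2 ⟨(x, y - x), Finset.mem_product.2 ⟨Finset.mem_Ico.2 hx,
    Finset.mem_Ioo.2 (abs_lt.1 hxy)⟩, by simp⟩

theorem exists_finset_pairs_of_mesoCoarsen_eq (hw : 0 < w)
    (κ : (Fin (M / w) → ℤ) × Set (Fin M) × (Fin (M + 1) → Option ℤ)) (i : Fin M) :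
    ∃ P : Finset (ℤ × ℤ), P.card ≤ 8 * w ^ 3 ∧
      ∀ k : Fin (M + 1) → ℤ, k 0 = 0 → mesoCoarsen M w k = κ → (k i.castSucc, k i.succ) ∈ P := by
  by_cases hκ : ∃ k₀ : Fin (M + 1) → ℤ, k₀ 0 = 0 ∧ mesoCoarsen M w k₀ = κ
  swap
  · exact ⟨∅, by simp, fun k hk₀ hk => (hκ ⟨k, hk₀, hk⟩).elim⟩
  obtain ⟨k₀, hk₀, rfl⟩ := hκ
  by_cases hlarge : (w : ℤ) ≤ |k₀ i.succ - k₀ i.castSucc|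
  · refine ⟨{(k₀ i.castSucc, k₀ i.succ)}, Nat.succ_le_of_lt (by positivity), fun k _ hk => ?_⟩
    rw [Finset.mem_singleton, apply_eq_of_mesoCoarsen_eq_of_large hk.symm hlarge (Or.inr rfl),
      apply_eq_of_mesoCoarsen_eq_of_large hk.symm hlarge (Or.inl rfl)]
  obtain ⟨lo, hlo⟩ := Int.exists_subset_Ico_of_abs_sub_lt
    (S := {x | ∃ k, k 0 = 0 ∧ mesoCoarsen M w k = mesoCoarsen M w k₀ ∧ k i.castSucc = x})
    (L := 3 * (w : ℤ) ^ 2) <| by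
      rintro _ ⟨k, hk0, hk, rfl⟩ _ ⟨k', hk0', hk', rfl⟩
      exact abs_sub_lt_of_mesoCoarsen_eq (hk.trans hk'.symm) hk0 hk0' hw i.castSucc.is_le
  refine ⟨windowPairs lo w, card_windowPairs_le lo w, fun k hk0 hk => mem_windowPairs
    (hlo ⟨k, hk0, hk, rfl⟩) (lt_of_not_ge fun hi => hlarge ((mesoCoarsen_large_iff hk i).1 hi))⟩

end MesoCoarsen

theorem Zdyad_le_mul_indicator {Ω : Type*} (j : ℤ) {x : ℝ} {E : Set Ω} {ω : Ω}
    (h : (2 : ℝ) ^ j ≤ x → ω ∈ E) : Zdyad j x ≤ 2 ^ (j + 1) * E.indicator 1 ω := by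
  unfold Zdyad
  split_ifs with hx
  · simp [Set.indicator_of_mem (h hx.1)]
  · exact mul_nonneg (by positivity) (Set.indicator_nonneg (fun _ _ => zero_le_one) _)

theorem iSup_sum_Zdyad_le_mul_sum_indicator {Ω : Type*} {M : ℕ} (Z : Fin M → ℤ → ℤ → Ω → ℝ)
    (j : ℤ) {Q : (Fin (M + 1) → ℤ) → Prop} (P : Fin M → Finset (ℤ × ℤ))
    (hP : ∀ k, Q k → ∀ i, (k i.castSucc, k i.succ) ∈ P i) (ω : Ω) :
    ⨆ (k : Fin (M + 1) → ℤ) (_ : Q k), ∑ i : Fin M, Zdyad j (Z i (k i.castSucc) (k i.succ) ω) ≤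
      2 ^ (j + 1) * ∑ i, (⋃ q ∈ P i, {ω | (2 : ℝ) ^ j ≤ Z i q.1 q.2 ω}).indicator 1 ω := by
  have hnonneg : 0 ≤ (2 : ℝ) ^ (j + 1) *
      ∑ i, (⋃ q ∈ P i, {ω | (2 : ℝ) ^ j ≤ Z i q.1 q.2 ω}).indicator 1 ω :=
    mul_nonneg (by positivity)
      (Finset.sum_nonneg fun _ _ => Set.indicator_nonneg (fun _ _ => zero_le_one) _)
  refine Real.iSup_le (fun k => Real.iSup_le (fun hk => ?_) hnonneg) hnonneg
  rw [Finset.mul_sum]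
  exact Finset.sum_le_sum fun i _ =>
    Zdyad_le_mul_indicator j fun hz => Set.mem_biUnion (hP k hk i) hz

theorem measure_biUnion_le_ofReal_min {ι Ω : Type*} [MeasurableSpace Ω] {μ : Measure Ω}
    [IsProbabilityMeasure μ] {s : Finset ι} {E : ι → Set Ω} {c : ℝ}
    (hE : ∀ i ∈ s, μ (E i) ≤ ENNReal.ofReal c) {N : ℕ} (hN : s.card ≤ N) :
    μ (⋃ i ∈ s, E i) ≤ ENNReal.ofReal (min 1 (N * c)) := by
  rw [ENNReal.ofReal_min, ENNReal.ofReal_one]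
  refine le_min prob_le_one ?_
  calc μ (⋃ i ∈ s, E i) ≤ ∑ i ∈ s, μ (E i) := measure_biUnion_finset_le _ _
    _ ≤ s.card * ENNReal.ofReal c := by simpa using Finset.sum_le_card_nsmul s _ _ hE
    _ ≤ N * ENNReal.ofReal c := by gcongr
    _ = ENNReal.ofReal (N * c) := by
        rw [ENNReal.ofReal_mul (Nat.cast_nonneg _), ENNReal.ofReal_natCast]

theorem statement3_general (C₁ C₂ β : ℝ) (hC₁ : 0 < C₁)
    (Ω : Type) [MeasureSpace Ω]
    (M : ℕ)
    (Z : Fin M → ℤ → ℤ → Ω → ℝ)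
    (hmeas : ∀ i k k', Measurable (Z i k k'))
    (htail : ∀ (i : Fin M) (k k' : ℤ) (z : ℝ), 0 < z →
      ℙ {ω | z ≤ Z i k k' ω} ≤ ENNReal.ofReal (C₁ * Real.exp (-C₂ * z ^ β)))
    (hindep : iIndep (fun i : Fin M =>
      ⨆ p : ℤ × ℤ, MeasurableSpace.comap (Z i p.1 p.2) inferInstance) ℙ)
    (w : ℕ) (hw : 2 ≤ w) (R : ℝ) (j : ℤ)
    (κStar : (Fin (M / w) → ℤ) × Set (Fin M) × (Fin (M + 1) → Option ℤ)) :
    ∀ t : ℝ,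
      ℙ {ω | (2 : ℝ) ^ (j + 1) * t ≤
            ⨆ (k : Fin (M + 1) → ℤ)
              (_ : k 0 = 0 ∧ (tau1 k : ℝ) ≤ R * M ∧ mesoCoarsen M w k = κStar),
              ∑ i : Fin M, Zdyad j (Z i (k i.castSucc) (k i.succ) ω)} ≤
        ENNReal.ofReal (binomTail M
          (min 1 (8 * (w : ℝ) ^ 3 * C₁ * Real.exp (-C₂ * (2 : ℝ) ^ ((j : ℝ) * β)))) t) := by
  intro t
  have := hindep.isProbabilityMeasure
  set p := min 1 (8 * (w : ℝ) ^ 3 * C₁ * Real.exp (-C₂ * (2 : ℝ) ^ ((j : ℝ) * β)))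
  have hp0 : 0 ≤ p := le_min zero_le_one (by positivity)
  have hp1 : p ≤ 1 := min_le_left _ _
  choose P hPcard hP using exists_finset_pairs_of_mesoCoarsen_eq (by omega : 0 < w) κStar
  set B : Fin M → Set Ω := fun i => ⋃ q ∈ P i, {ω | (2 : ℝ) ^ j ≤ Z i q.1 q.2 ω}
  have hBσ : ∀ i, MeasurableSet[⨆ q : ℤ × ℤ, MeasurableSpace.comap (Z i q.1 q.2) inferInstance]
      (B i) := fun i => Finset.measurableSet_biUnion _ fun q _ =>
    le_iSup (fun q : ℤ × ℤ => MeasurableSpace.comap (Z i q.1 q.2) inferInstance) q _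
      ⟨Set.Ici _, measurableSet_Ici, rfl⟩
  have hexp : ((2 : ℝ) ^ j) ^ β = 2 ^ ((j : ℝ) * β) := by
    rw [← Real.rpow_intCast, ← Real.rpow_mul zero_le_two]
  have hpB : ∀ i, ℙ (B i) ≤ ENNReal.ofReal p := fun i => by
    convert measure_biUnion_le_ofReal_min
      (E := fun q : ℤ × ℤ => {ω | (2 : ℝ) ^ j ≤ Z i q.1 q.2 ω})
      (fun q _ => hexp ▸ htail i q.1 q.2 _ (zpow_pos two_pos j)) (hPcard i) using 3
    push_cast
    ring
  rw [ENNReal.le_ofReal_iff_toReal_le (measure_ne_top _ _) (binomTail_nonneg hp0 hp1 _ _)]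
  calc Measure.real ℙ _ ≤ Measure.real ℙ {ω | t ≤ ∑ i, (B i).indicator 1 ω} :=
        measureReal_mono fun ω hω => le_of_mul_le_mul_left (hω.trans <|
          iSup_sum_Zdyad_le_mul_sum_indicator Z j P (fun k hk i => hP i k hk.1 hk.2.2) ω)
          (by positivity)
    _ ≤ binomTail M p t := by
        simpa using measureReal_le_sum_indicator_le_binomTail
          (fun i => iSup_le (fun q : ℤ × ℤ => (hmeas i q.1 q.2).comap_le) _ (hBσ i))
          (iIndep.iIndepSet_of_measurableSet hindep hBσ) hp0 hp1
          (fun i => ENNReal.toReal_le_of_le_ofReal hp0 (hpB i)) Finset.univ t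

theorem statement3 (C₁ C₂ β : ℝ) (hC₁ : 0 < C₁) (hC₂ : 0 < C₂) (hβ0 : 0 < β) (hβ1 : β < 1)
    (Ω : Type) [MeasureSpace Ω] (hprob : IsProbabilityMeasure (ℙ : Measure Ω))
    (M : ℕ) (hM : 1 ≤ M)
    (Z : Fin M → ℤ → ℤ → Ω → ℝ) (zmax : ℝ) (hzmax : 0 < zmax)
    (hmeas : ∀ i k k', Measurable (Z i k k'))
    (htail : ∀ (i : Fin M) (k k' : ℤ) (z : ℝ), 0 < z →
      ℙ {ω | z ≤ Z i k k' ω} ≤ ENNReal.ofReal (C₁ * Real.exp (-C₂ * z ^ β)))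
    (hbdd : ∀ (i : Fin M) (k k' : ℤ), ℙ {ω | Z i k k' ω ≤ zmax} = 1)
    (hindep : iIndep (fun i : Fin M =>
      ⨆ p : ℤ × ℤ, MeasurableSpace.comap (Z i p.1 p.2) inferInstance) ℙ)
    (w : ℕ) (hw : 2 ≤ w) (R : ℝ) (hR : 1 ≤ R) (j : ℤ) (hj : 1 ≤ j)
    (κStar : (Fin (M / w) → ℤ) × Set (Fin M) × (Fin (M + 1) → Option ℤ))
    (hκ : κStar ∈ mesoCoarsen M w '' {k : Fin (M + 1) → ℤ | k 0 = 0 ∧ (tau1 k : ℝ) ≤ R * M}) :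
    ∀ t : ℝ,
      ℙ {ω | (2 : ℝ) ^ (j + 1) * t ≤
            ⨆ (k : Fin (M + 1) → ℤ)
              (_ : k 0 = 0 ∧ (tau1 k : ℝ) ≤ R * M ∧ mesoCoarsen M w k = κStar),
              ∑ i : Fin M, Zdyad j (Z i (k i.castSucc) (k i.succ) ω)} ≤
        ENNReal.ofReal (binomTail M
          (min 1 (8 * (w : ℝ) ^ 3 * C₁ * Real.exp (-C₂ * (2 : ℝ) ^ ((j : ℝ) * β)))) t) :=
  statement3_general C₁ C₂ β hC₁ Ω M Z hmeas htail hindep w hw R j κStar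
end

section
/- There exist constants C₅, C₆ > 0 and a threshold C₄' > 0, all depending only on C₁, C₂ and β, such that for every constant C₄ ≥ C₄', every integer M ≥ 1, and all sufficiently large R and z (sufficiently large depending only on C₁, C₂, β and C₄): ℙ( Σ over integers j > j_max of ( max over k ∈ 𝔎_M with τ₁(k) ≤ R·M of Σ_{i=1}^M Z^j_{i,k_{i−1},k_i} ) > 0 ) ≤ C₅·exp(−C₆·z^β − C₆·(z/z_max)·z_max^β). -/
/-!
A term `Z^j_{i,k_{i-1},k_i}` with `j > j_max` is nonzero only if
`Z_{i,k_{i-1},k_i} ≥ 2^{j_max+1} > min((log RM)^{C₄} + z, z_max)`, and `τ₁(k) ≤ RM` with `k₀ = 0`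
forces `|k_i| ≤ RM`, so only `M(2⌊RM⌋+1)²` of the variables are involved and a union bound
suffices. If the minimum is `z_max` every such tail event is null. Otherwise each tail is at most
`C₁ exp(-C₂ ((log RM)^{C₄} + z)^β)`; since `C₄β ≥ 2`, the factor `(log RM)^{C₄β}` absorbs the
count `(RM)⁴ = exp(4 log RM)`, and `β ≤ 1` gives `(z/z_max) z_max^β ≤ z^β`.
-/

open MeasureTheory ProbabilityTheory Real
open scoped ProbabilityTheory Classical

/-- `j_max = ⌈log₂(min((log(RM))^{C₄} + z, z_max))⌉`. -/
noncomputable def jmaxDef (C₄ R M z zmax : ℝ) : ℤ :=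
  ⌈Real.logb 2 (min (Real.log (R * M) ^ C₄ + z) zmax)⌉

open Finset
open scoped ENNReal

lemma abs_sub_le_sum_range_abs_sub {G : Type*} [AddCommGroup G] [LinearOrder G]
    [IsOrderedAddMonoid G] (f : ℕ → G) (n : ℕ) :
    |f n - f 0| ≤ ∑ i ∈ range n, |f (i + 1) - f i| := by
  rw [← sum_range_sub]
  exact abs_sum_le_sum_abs _ _

lemma abs_le_tau1 {M : ℕ} {k : Fin (M + 1) → ℤ} (hk : k 0 = 0) (i : Fin (M + 1)) :
    |k i| ≤ tau1 k := by
  set κ : ℕ → ℤ := fun n => if h : n < M + 1 then k ⟨n, h⟩ else 0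
  have hκ : ∀ i : Fin (M + 1), κ i = k i := fun i => dif_pos i.isLt
  have hκ0 : κ 0 = 0 := by simpa [hk] using hκ 0
  have htau : tau1 k = ∑ j ∈ range M, |κ (j + 1) - κ j| := by
    rw [tau1, ← Fin.sum_univ_eq_sum_range (fun j => |κ (j + 1) - κ j|)]
    refine sum_congr rfl fun j _ => ?_
    rw [← hκ j.succ, ← hκ j.castSucc, Fin.val_succ, Fin.val_castSucc]
  calc |k i| = |κ i - κ 0| := by rw [hκ i, hκ0, sub_zero]
    _ ≤ ∑ j ∈ range i, |κ (j + 1) - κ j| := abs_sub_le_sum_range_abs_sub κ i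
    _ ≤ ∑ j ∈ range M, |κ (j + 1) - κ j| :=
      sum_le_sum_of_subset_of_nonneg (range_subset_range.2 (Nat.lt_succ_iff.1 i.isLt))
        fun _ _ _ => abs_nonneg _
    _ = tau1 k := htau.symm

lemma mem_Icc_floor_of_tau1_le {M : ℕ} {k : Fin (M + 1) → ℤ} {B : ℝ} (hk : k 0 = 0)
    (hB : (tau1 k : ℝ) ≤ B) (i : Fin (M + 1)) : k i ∈ Icc (-⌊B⌋) ⌊B⌋ :=
  mem_Icc.2 (abs_le.1 ((abs_le_tau1 hk i).trans (Int.le_floor.2 hB)))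

lemma exists_zpow_le_of_sum_Zdyad_pos {ι : Type*} {s : Finset ι} {j : ℤ} {x : ι → ℝ}
    (h : 0 < ∑ i ∈ s, Zdyad j (x i)) : ∃ i ∈ s, (2 : ℝ) ^ j ≤ x i := by
  obtain ⟨i, hi, hpos⟩ := exists_lt_of_sum_lt (f := fun _ => (0 : ℝ)) (by simpa using h)
  refine ⟨i, hi, by_contra fun hlt => ?_⟩
  simp [Zdyad, hlt] at hpos

lemma measure_exists_Zdyad_pos_le {Ω : Type*} [MeasurableSpace Ω] (μ : Measure Ω) {M : ℕ}
    (Z : Fin M → ℤ → ℤ → Ω → ℝ) (j₀ : ℤ) (B : ℝ) {ε : ℝ≥0∞}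
    (hε : ∀ i k k', μ {ω | (2 : ℝ) ^ (j₀ + 1) ≤ Z i k k' ω} ≤ ε) :
    μ {ω | ∃ j : ℤ, j₀ < j ∧ ∃ k : Fin (M + 1) → ℤ, k 0 = 0 ∧ (tau1 k : ℝ) ≤ B ∧
        0 < ∑ i : Fin M, Zdyad j (Z i (k i.castSucc) (k i.succ) ω)} ≤
      ((M * #(Icc (-⌊B⌋) ⌊B⌋) ^ 2 : ℕ) : ℝ≥0∞) * ε := by
  set T := Icc (-⌊B⌋) ⌊B⌋
  set tail : Fin M → ℤ × ℤ → Set Ω := fun i p => {ω | (2 : ℝ) ^ (j₀ + 1) ≤ Z i p.1 p.2 ω}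
  have hsub : {ω | ∃ j : ℤ, j₀ < j ∧ ∃ k : Fin (M + 1) → ℤ, k 0 = 0 ∧ (tau1 k : ℝ) ≤ B ∧
      0 < ∑ i : Fin M, Zdyad j (Z i (k i.castSucc) (k i.succ) ω)} ⊆
        ⋃ i, ⋃ p ∈ T ×ˢ T, tail i p := by
    rintro ω ⟨j, hj, k, hk0, hkB, hpos⟩
    obtain ⟨i, -, hi⟩ := exists_zpow_le_of_sum_Zdyad_pos hpos
    simp only [Set.mem_iUnion]
    exact ⟨i, (k i.castSucc, k i.succ),
      mem_product.2 ⟨mem_Icc_floor_of_tau1_le hk0 hkB _, mem_Icc_floor_of_tau1_le hk0 hkB _⟩,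
      (zpow_le_zpow_right₀ one_le_two (by omega)).trans hi⟩
  calc μ _ ≤ μ (⋃ i, ⋃ p ∈ T ×ˢ T, tail i p) := measure_mono hsub
    _ ≤ ∑ i, ∑ p ∈ T ×ˢ T, μ (tail i p) :=
      (measure_iUnion_fintype_le _ _).trans (sum_le_sum fun i _ => measure_biUnion_finset_le _ _)
    _ ≤ ∑ _i : Fin M, ∑ _p ∈ T ×ˢ T, ε := sum_le_sum fun i _ => sum_le_sum fun p _ => hε _ _ _
    _ = _ := by simp [card_product, sq, mul_assoc]

lemma measure_ge_eq_zero_of_measure_le_eq_one {Ω : Type*} [MeasurableSpace Ω] {μ : Measure Ω}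
    [IsProbabilityMeasure μ] {X : Ω → ℝ} (hX : Measurable X) {w t : ℝ}
    (hw : μ {ω | X ω ≤ w} = 1) (hwt : w < t) : μ {ω | t ≤ X ω} = 0 :=
  measure_mono_null (fun _ hω => not_le.2 (hwt.trans_le hω))
    ((prob_compl_eq_zero_iff (measurableSet_le hX measurable_const)).2 hw)

lemma lt_two_zpow_ceil_logb_add_one {m : ℝ} (hm : 0 < m) : m < (2 : ℝ) ^ (⌈logb 2 m⌉ + 1) := by
  calc m = (2 : ℝ) ^ logb 2 m := (rpow_logb two_pos (by norm_num) hm).symm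
    _ < (2 : ℝ) ^ (((⌈logb 2 m⌉ + 1 : ℤ)) : ℝ) :=
      rpow_lt_rpow_of_exponent_lt one_lt_two (by push_cast; linarith [Int.le_ceil (logb 2 m)])
    _ = _ := rpow_intCast 2 _

lemma div_mul_rpow_le_rpow {z w β : ℝ} (hz : 0 ≤ z) (hzw : z ≤ w) (hβ : β ≤ 1) :
    z / w * w ^ β ≤ z ^ β := by
  rcases hz.eq_or_lt with rfl | hz
  · simpa using rpow_nonneg le_rfl β
  have hw : 0 < w := hz.trans_le hzw
  calc z / w * w ^ β = z * w ^ (β - 1) := by rw [rpow_sub_one hw.ne']; ring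
    _ ≤ z * z ^ (β - 1) :=
      mul_le_mul_of_nonneg_left (rpow_le_rpow_of_nonpos hz hzw (by linarith)) hz.le
    _ = z ^ β := by rw [rpow_sub_one hz.ne']; field_simp

lemma four_mul_sub_mul_rpow_le {C β L t z w : ℝ} (hC : 0 < C) (hβ0 : 0 ≤ β) (hβ1 : β ≤ 1)
    (hL : 8 / C ≤ L) (hLt : L ^ 2 ≤ t ^ β) (hz : 0 ≤ z) (hzt : z ≤ t) (hzw : z ≤ w) :
    4 * L - C * t ^ β ≤ -(C / 4) * z ^ β - C / 4 * (z / w) * w ^ β := by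
  have hCL : 8 ≤ C * L := by rwa [div_le_iff₀ hC, mul_comm] at hL
  have hw := mul_le_mul_of_nonneg_left (div_mul_rpow_le_rpow hz hzw hβ1) hC.le
  have ht := mul_le_mul_of_nonneg_left (rpow_le_rpow hz hzt hβ0) hC.le
  have hL2 := mul_le_mul_of_nonneg_left hLt hC.le
  nlinarith

lemma one_le_log_mul {R : ℝ} {M : ℕ} (hR : 9 ≤ R) (hM : 1 ≤ M) : 1 ≤ log (R * M) := by
  have hRM : R ≤ R * M := le_mul_of_one_le_right (by linarith) (by exact_mod_cast hM)
  rw [le_log_iff_exp_le (by linarith)]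
  linarith [exp_one_lt_d9]

lemma card_Icc_neg_floor_le {B : ℝ} (hB : 1 ≤ B) : (#(Icc (-⌊B⌋) ⌊B⌋) : ℝ) ≤ 3 * B := by
  have hfloor : 0 ≤ ⌊B⌋ := Int.floor_nonneg.2 (by linarith)
  have hcard : (#(Icc (-⌊B⌋) ⌊B⌋) : ℤ) = 2 * ⌊B⌋ + 1 := by rw [Int.card_Icc]; omega
  have hcard' : (#(Icc (-⌊B⌋) ⌊B⌋) : ℝ) = 2 * ⌊B⌋ + 1 := by exact_mod_cast hcard
  linarith [Int.floor_le B]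

lemma count_le_exp_four_mul_log {R : ℝ} {M : ℕ} (hR : 9 ≤ R) (hM : 1 ≤ M) :
    ((M * #(Icc (-⌊R * M⌋) ⌊R * M⌋) ^ 2 : ℕ) : ℝ) ≤ exp (4 * log (R * M)) := by
  have hM' : (1 : ℝ) ≤ M := by exact_mod_cast hM
  have hMRM : (M : ℝ) ≤ R * M := le_mul_of_one_le_left (by linarith) (by linarith)
  have hRM : 9 ≤ R * M := by nlinarith
  have hcard := card_Icc_neg_floor_le (B := R * M) (by linarith)
  push_cast
  calc (M : ℝ) * (#(Icc (-⌊R * M⌋) ⌊R * M⌋) : ℝ) ^ 2 ≤ (R * M) * (3 * (R * M)) ^ 2 := by gcongr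
    _ = 9 * (R * M) ^ 3 := by ring
    _ ≤ (R * M) * (R * M) ^ 3 := by gcongr
    _ = (R * M) ^ 4 := by ring
    _ = exp (4 * log (R * M)) := by
      rw [show (4 : ℝ) = (4 : ℕ) by norm_num, exp_nat_mul, exp_log (by linarith)]

lemma count_mul_tail_le {C₁ C₂ β C₄ R z w t : ℝ} {M : ℕ} (hC₁ : 0 < C₁) (hC₂ : 0 < C₂)
    (hβ0 : 0 < β) (hβ1 : β ≤ 1) (hC₄ : 2 / β ≤ C₄) (hR : max 9 (exp (8 / C₂)) ≤ R) (hM : 1 ≤ M)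
    (hz : 0 ≤ z) (hzw : z ≤ w) (ht : log (R * M) ^ C₄ + z ≤ t) :
    ((M * #(Icc (-⌊R * M⌋) ⌊R * M⌋) ^ 2 : ℕ) : ℝ) * (C₁ * exp (-C₂ * t ^ β)) ≤
      C₁ * exp (-(C₂ / 4) * z ^ β - C₂ / 4 * (z / w) * w ^ β) := by
  set L := log (R * M)
  have hR9 : 9 ≤ R := (le_max_left _ _).trans hR
  have hL1 : 1 ≤ L := one_le_log_mul hR9 hM
  have hL8 : 8 / C₂ ≤ L := by
    have hRM : R ≤ R * M := le_mul_of_one_le_right (by linarith) (by exact_mod_cast hM)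
    rw [le_log_iff_exp_le (by linarith)]
    exact ((le_max_right _ _).trans hR).trans hRM
  have hLC : 0 ≤ L ^ C₄ := rpow_nonneg (by linarith) _
  have hLt : L ^ 2 ≤ t ^ β :=
    calc L ^ 2 = L ^ (2 : ℝ) := (rpow_two L).symm
      _ ≤ L ^ (C₄ * β) := rpow_le_rpow_of_exponent_le hL1 (by rwa [div_le_iff₀ hβ0] at hC₄)
      _ = (L ^ C₄) ^ β := rpow_mul (by linarith) _ _
      _ ≤ t ^ β := rpow_le_rpow hLC (by linarith) hβ0.le
  have hexp := four_mul_sub_mul_rpow_le hC₂ hβ0.le hβ1 hL8 hLt hz (by linarith) hzw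
  calc _ ≤ exp (4 * L) * (C₁ * exp (-C₂ * t ^ β)) :=
        mul_le_mul_of_nonneg_right (count_le_exp_four_mul_log hR9 hM) (by positivity)
    _ = C₁ * exp (4 * L - C₂ * t ^ β) := by rw [sub_eq_add_neg, exp_add]; ring_nf
    _ ≤ _ := by gcongr

theorem statement4 (C₁ C₂ β : ℝ) (hC₁ : 0 < C₁) (hC₂ : 0 < C₂) (hβ0 : 0 < β) (hβ1 : β < 1) :
    ∃ C₅ C₆ C₄' : ℝ, 0 < C₅ ∧ 0 < C₆ ∧ 0 < C₄' ∧
      ∀ C₄ : ℝ, C₄' ≤ C₄ →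
      ∃ R₀ z₀ : ℝ,
        ∀ (Ω : Type) [MeasureSpace Ω], IsProbabilityMeasure (ℙ : Measure Ω) →
        ∀ (M : ℕ), 1 ≤ M →
        ∀ (Z : Fin M → ℤ → ℤ → Ω → ℝ) (zmax : ℝ), 0 < zmax →
        (∀ i k k', Measurable (Z i k k')) →
        (∀ (i : Fin M) (k k' : ℤ) (z : ℝ), 0 < z →
          ℙ {ω | z ≤ Z i k k' ω} ≤ ENNReal.ofReal (C₁ * Real.exp (-C₂ * z ^ β))) →
        (∀ (i : Fin M) (k k' : ℤ), ℙ {ω | Z i k k' ω ≤ zmax} = 1) →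
        iIndep (fun i : Fin M =>
          ⨆ p : ℤ × ℤ, MeasurableSpace.comap (Z i p.1 p.2) inferInstance) ℙ →
        ∀ R z : ℝ, R₀ ≤ R → z₀ ≤ z →
        ℙ {ω | ∃ j : ℤ, jmaxDef C₄ R M z zmax < j ∧
              ∃ k : Fin (M + 1) → ℤ, k 0 = 0 ∧ (tau1 k : ℝ) ≤ R * M ∧
                0 < ∑ i : Fin M, Zdyad j (Z i (k i.castSucc) (k i.succ) ω)} ≤
          ENNReal.ofReal (C₅ * Real.exp (-C₆ * z ^ β - C₆ * (z / zmax) * zmax ^ β)) := by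
  refine ⟨C₁, C₂ / 4, 2 / β, hC₁, by positivity, by positivity,
    fun C₄ hC₄ => ⟨max 9 (exp (8 / C₂)), 0, ?_⟩⟩
  intro Ω _ _ M hM Z zmax hzmax hmeas htail hbdd _ R z hR hz
  have hL : 1 ≤ log (R * M) ^ C₄ :=
    one_le_rpow (one_le_log_mul ((le_max_left _ _).trans hR) hM)
      ((by positivity : 0 ≤ 2 / β).trans hC₄)
  set t : ℝ := 2 ^ (jmaxDef C₄ R M z zmax + 1)
  have hmt : min (log (R * M) ^ C₄ + z) zmax < t :=
    lt_two_zpow_ceil_logb_add_one (lt_min (by linarith) hzmax)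
  rcases le_or_gt zmax (log (R * M) ^ C₄ + z) with hcap | hcap
  · have hnull : ∀ i k k', ℙ {ω | t ≤ Z i k k' ω} ≤ 0 := fun i k k' =>
      (measure_ge_eq_zero_of_measure_le_eq_one (hmeas i k k') (hbdd i k k')
        (by rwa [min_eq_right hcap] at hmt)).le
    exact (measure_exists_Zdyad_pos_le ℙ Z _ _ hnull).trans (by simp)
  · refine (measure_exists_Zdyad_pos_le ℙ Z _ _
      fun i k k' => htail i k k' t (by positivity)).trans ?_
    rw [← ENNReal.ofReal_natCast, ← ENNReal.ofReal_mul (Nat.cast_nonneg _)]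
    rw [min_eq_left hcap.le] at hmt
    exact ENNReal.ofReal_le_ofReal
      (count_mul_tail_le hC₁ hC₂ hβ0 hβ1.le hC₄ hR hM hz (by linarith) hmt.le)
end

section
/- Fix an integer K ≥ 1 and reals H₀ > 0, c' > 0 and θ ∈ (0,1). There exist ε > 0 (depending only on K and H₀) and constants c > 0 and M₀ (depending only on K, H₀, c' and θ) such that the following holds for every integer M ≥ M₀. Let G_{i,j} (1 ≤ i ≤ M, j ∈ ℤ) be events with the K-range independence property and ℙ(G_{i,j}) ≥ 1 − ε for all i, j, and let J₀ = 0, J₁, …, J_M be ℤ-valued random variables on the same probability space with ℙ( Σ_{i=1}^M |J_i − J_{i−1}| ≥ H₀·M ) ≤ exp(−c'·M^{θ/4}). Then ℙ( Σ_{i=1}^M 1_{G_{i,J_i}} ≥ (99/100)·M ) ≥ 1 − exp(−c·M^{θ/4}). -/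
/-!
Fix a lattice path `p` and colour column `i` by `i % K`. Columns of one colour are at least
`K` apart, so their events `G i (p i)` are independent. By pigeonhole, `M / 100` failures along
`p` include `M / (100 K)` failures of one colour, and a union bound over such sets of columns
bounds the probability of this by `2 ^ M ε ^ (M / (100 K))`. Off the event of total displacement
`≥ H₀ M`, `J` follows one of at most `2 ^ (H₀ M + 1) 4 ^ M` lattice paths (increments in an `ℓ¹`
ball, counted with weights `2 ^ (-|d|)`). For `ε = e ^ (-β)`, `β = 100 K (H₀ + 4)`, the union
bound over these paths is `O(e ^ (-M))`, negligible next to `e ^ (-c' M ^ (θ / 4))`.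
-/open MeasureTheory ProbabilityTheory Real Finset Filter
open scoped ENNReal

noncomputable def latticeL1Ball (ι : Type*) [Fintype ι] [DecidableEq ι] (N : ℕ) :
    Finset (ι → ℤ) :=
  {d ∈ Fintype.piFinset fun _ => Icc (-(N : ℤ)) N | ∑ i, |d i| ≤ N}

lemma mem_latticeL1Ball {ι : Type*} [Fintype ι] [DecidableEq ι] {N : ℕ} {d : ι → ℤ} :
    d ∈ latticeL1Ball ι N ↔ ∑ i, |d i| ≤ N := by
  refine ⟨fun hd => (mem_filter.1 hd).2, fun hd => mem_filter.2 ⟨?_, hd⟩⟩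
  refine Fintype.mem_piFinset.2 fun i => mem_Icc.2 (abs_le.1 ?_)
  exact (single_le_sum (fun j _ => abs_nonneg (d j)) (mem_univ i)).trans hd

lemma sum_Icc_half_pow_natAbs_le (N : ℕ) :
    ∑ j ∈ Icc (-(N : ℤ)) N, (1 / 2 : ℝ) ^ j.natAbs ≤ 4 := by
  set φ : Bool × ℕ → ℤ := fun bk => if bk.1 then bk.2 else -bk.2
  have hsub : Icc (-(N : ℤ)) N ⊆ (univ ×ˢ range (N + 1)).image φ := by
    intro j hj
    rw [mem_Icc] at hj
    simp only [mem_image, mem_product, mem_univ, mem_range, true_and, Prod.exists, φ]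
    rcases le_total 0 j with h | h
    · exact ⟨true, j.toNat, by omega, by simp only [↓reduceIte, Int.ofNat_toNat]; omega⟩
    · exact ⟨false, (-j).toNat, by omega, by simp only [Bool.false_eq_true, ↓reduceIte]; omega⟩
  calc ∑ j ∈ Icc (-(N : ℤ)) N, (1 / 2 : ℝ) ^ j.natAbs
      ≤ ∑ j ∈ (univ ×ˢ range (N + 1)).image φ, (1 / 2 : ℝ) ^ j.natAbs :=
        sum_le_sum_of_subset_of_nonneg hsub fun _ _ _ => by positivity
    _ ≤ ∑ bk ∈ univ ×ˢ range (N + 1), (1 / 2 : ℝ) ^ bk.2 := by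
        refine (sum_image_le_of_nonneg fun _ _ => by positivity).trans_eq (sum_congr rfl ?_)
        rintro ⟨b, k⟩ -
        cases b <;> simp [φ]
    _ = 2 * ∑ k ∈ range (N + 1), (1 / 2 : ℝ) ^ k := by
        rw [sum_product]
        simp
    _ ≤ 4 := by linarith [sum_geometric_two_le (N + 1)]

/-- Each point `d` of the ball has weight `2 ^ N * 2 ^ (-‖d‖₁) ≥ 1`, and the total weight of
the enclosing box factorises over the coordinates. -/
lemma card_latticeL1Ball_le (ι : Type*) [Fintype ι] [DecidableEq ι] (N : ℕ) :
    (#(latticeL1Ball ι N) : ℝ) ≤ 2 ^ N * 4 ^ Fintype.card ι := by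
  have hweight : ∀ d ∈ latticeL1Ball ι N,
      (1 : ℝ) ≤ 2 ^ N * ∏ i, (1 / 2 : ℝ) ^ (d i).natAbs := by
    intro d hd
    have hsum : ∑ i, (d i).natAbs ≤ N := by
      have := mem_latticeL1Ball.1 hd
      zify
      simpa only [Int.natCast_natAbs] using this
    rw [prod_pow_eq_pow_sum]
    calc (1 : ℝ) = 2 ^ N * (1 / 2) ^ N := by rw [← mul_pow]; norm_num
      _ ≤ 2 ^ N * (1 / 2) ^ ∑ i, (d i).natAbs :=
        mul_le_mul_of_nonneg_left (pow_le_pow_of_le_one (by norm_num) (by norm_num) hsum)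
          (by positivity)
  calc (#(latticeL1Ball ι N) : ℝ) = ∑ d ∈ latticeL1Ball ι N, 1 := by simp
    _ ≤ ∑ d ∈ latticeL1Ball ι N, 2 ^ N * ∏ i, (1 / 2 : ℝ) ^ (d i).natAbs :=
        sum_le_sum hweight
    _ ≤ ∑ d ∈ Fintype.piFinset fun _ : ι => Icc (-(N : ℤ)) N,
          2 ^ N * ∏ i, (1 / 2 : ℝ) ^ (d i).natAbs :=
        sum_le_sum_of_subset_of_nonneg (filter_subset _ _) fun _ _ _ => by positivity
    _ = 2 ^ N * ∏ _i : ι, ∑ j ∈ Icc (-(N : ℤ)) N, (1 / 2 : ℝ) ^ j.natAbs := by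
        rw [← mul_sum, prod_univ_sum]
    _ ≤ 2 ^ N * ∏ _i : ι, (4 : ℝ) := by
        gcongr with i
        exact sum_Icc_half_pow_natAbs_le N
    _ = 2 ^ N * 4 ^ Fintype.card ι := by simp

lemma partialSum_sub_eq_self {G : Type*} [AddCommGroup G] {M : ℕ} {q : Fin (M + 1) → G}
    (h0 : q 0 = 0) : Fin.partialSum (fun i => q i.succ - q i.castSucc) = q := by
  simpa [h0, neg_add_eq_sub] using Fin.partialSum_left_neg q

lemma div_lt_card_compl_of_sum_indicator_lt {Ω ι : Type*} [Fintype ι] {s : ι → Set Ω}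
    [∀ i, DecidablePred (· ∈ s i)] {ω : Ω}
    (h : ∑ i, (s i).indicator (fun _ => (1 : ℝ)) ω < 99 / 100 * Fintype.card ι) :
    Fintype.card ι / 100 < #{i | ω ∈ (s i)ᶜ} := by
  have hsum : ∑ i, (s i).indicator (fun _ => (1 : ℝ)) ω = #{i | ω ∈ s i} := by
    simp [Set.indicator_apply, sum_boole]
  have hsplit := card_filter_add_card_filter_not (s := univ) (fun i => ω ∈ s i)
  simp only [card_univ, ← Set.mem_compl_iff] at hsplit
  have hdiv : ((Fintype.card ι / 100 : ℕ) : ℝ) ≤ Fintype.card ι / 100 := Nat.cast_div_le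
  have hsplit' : (#{i | ω ∈ s i} : ℝ) + #{i | ω ∈ (s i)ᶜ} = Fintype.card ι := by
    exact_mod_cast hsplit
  exact_mod_cast (show ((Fintype.card ι / 100 : ℕ) : ℝ) < #{i | ω ∈ (s i)ᶜ} by linarith)

lemma le_abs_sub_of_mod_eq {K x y : ℕ} (hxy : x ≠ y) (h : x % K = y % K) :
    (K : ℤ) ≤ |(x : ℤ) - y| := by
  have hdvd : (K : ℤ) ∣ (x : ℤ) - y := Nat.modEq_iff_dvd.1 h.symm
  have := Int.natAbs_le_of_dvd_ne_zero hdvd (sub_ne_zero.2 (by exact_mod_cast hxy))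
  rw [← Int.natCast_natAbs]
  exact_mod_cast this

open scoped Classical in
/-- Some colour class contains `L` of the occurring events; a union bound over the monochromatic
`L`-sets then gives the estimate. -/
lemma measure_setOf_mul_le_card_le {Ω ι : Type*} [MeasurableSpace Ω] {μ : Measure Ω}
    [Fintype ι] {K : ℕ} [NeZero K] (κ : ι → Fin K) {B : ι → Set Ω} {δ : ℝ≥0∞}
    (hB : ∀ T : Finset ι, (∀ i ∈ T, ∀ j ∈ T, κ i = κ j) → μ (⋂ i ∈ T, B i) ≤ δ ^ #T)
    (L : ℕ) : μ {ω | K * L ≤ #{i | ω ∈ B i}} ≤ 2 ^ Fintype.card ι * δ ^ L := by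
  set S : Finset (Finset ι) := {T ∈ univ.powerset | #T = L ∧ ∀ i ∈ T, ∀ j ∈ T, κ i = κ j}
  have hcover : {ω | K * L ≤ #{i | ω ∈ B i}} ⊆ ⋃ T ∈ S, ⋂ i ∈ T, B i := by
    intro ω hω
    obtain ⟨k, -, hk⟩ := exists_le_card_fiber_of_mul_le_card_of_maps_to (f := κ)
      (fun _ _ => mem_univ _) univ_nonempty (by simpa using hω)
    obtain ⟨T, hTsub, hTcard⟩ := exists_subset_card_eq hk
    have hT : ∀ i ∈ T, ω ∈ B i ∧ κ i = k := fun i hi => by simpa using hTsub hi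
    simp only [Set.mem_iUnion, Set.mem_iInter]
    refine ⟨T, mem_filter.2 ⟨mem_powerset.2 (subset_univ T), hTcard, fun i hi j hj => ?_⟩,
      fun i hi => (hT i hi).1⟩
    exact (hT i hi).2.trans (hT j hj).2.symm
  have hS : (#S : ℝ≥0∞) ≤ 2 ^ Fintype.card ι := by
    exact_mod_cast (card_filter_le _ _).trans (by simp)
  calc μ {ω | K * L ≤ #{i | ω ∈ B i}} ≤ μ (⋃ T ∈ S, ⋂ i ∈ T, B i) := measure_mono hcover
    _ ≤ ∑ T ∈ S, μ (⋂ i ∈ T, B i) := measure_biUnion_finset_le _ _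
    _ ≤ ∑ _T ∈ S, δ ^ L := sum_le_sum fun T hT => by
        obtain ⟨-, hTcard, hTmono⟩ := mem_filter.1 hT
        exact hTcard ▸ hB T hTmono
    _ = #S * δ ^ L := by rw [sum_const, nsmul_eq_mul]
    _ ≤ 2 ^ Fintype.card ι * δ ^ L := by gcongr

open scoped Classical in
lemma compl_setOf_le_sum_indicator_subset {Ω : Type*} {K M : ℕ} {G : Fin M → ℤ → Set Ω}
    {J : Fin (M + 1) → Ω → ℤ} (hJ0 : ∀ ω, J 0 ω = 0) (h : ℝ) :
    {ω | (99 / 100 : ℝ) * M ≤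
        ∑ i : Fin M, (G i (J i.succ ω)).indicator (fun _ => (1 : ℝ)) ω}ᶜ ⊆
      {ω | h ≤ ((∑ i : Fin M, |J i.succ ω - J i.castSucc ω| : ℤ) : ℝ)} ∪
        ⋃ d ∈ latticeL1Ball (Fin M) ⌈h⌉₊,
          {ω | K * (M / (100 * K)) ≤ #{i | ω ∈ (G i (Fin.partialSum d i.succ))ᶜ}} := by
  intro ω hω
  rw [Set.mem_union, or_iff_not_imp_left]
  intro hA
  simp only [Set.mem_compl_iff, Set.mem_ofPred_eq, not_le] at hA hω
  refine Set.mem_biUnion (x := fun i => J i.succ ω - J i.castSucc ω) ?_ ?_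
  · rw [mem_coe, mem_latticeL1Ball]
    exact_mod_cast (hA.trans_le (Nat.le_ceil h)).le
  · have hKL : K * (M / (100 * K)) ≤ M / 100 := by
      simpa only [Nat.div_div_eq_div_mul] using Nat.mul_div_le (M / 100) K
    have hbad := div_lt_card_compl_of_sum_indicator_lt (s := fun i => G i (J i.succ ω))
      (by simpa using hω)
    simp only [Fintype.card_fin] at hbad
    simp only [partialSum_sub_eq_self (q := fun k => J k ω) (hJ0 ω), Set.mem_ofPred_eq]
    omega

section KRangeIndependence

variable {Ω : Type*} [MeasurableSpace Ω] {μ : Measure Ω}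

def KRangeIndep {M : ℕ} (K : ℕ) (G : Fin M → ℤ → Set Ω) (μ : Measure Ω) : Prop :=
  ∀ (r : ℕ) (s : Fin r → Fin M × ℤ),
    (∀ a b, a ≠ b → (K : ℤ) ≤ |(((s a).1 : ℕ) : ℤ) - (((s b).1 : ℕ) : ℤ)|) →
    iIndepSet (fun a => G (s a).1 (s a).2) μ

lemma measure_compl_le_ofReal [IsProbabilityMeasure μ] {s : Set Ω} (hs : MeasurableSet s)
    {ε : ℝ} (h : ENNReal.ofReal (1 - ε) ≤ μ s) : μ sᶜ ≤ ENNReal.ofReal ε := by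
  rw [prob_compl_eq_one_sub hs, tsub_le_iff_right]
  calc (1 : ℝ≥0∞) = ENNReal.ofReal (ε + (1 - ε)) := by simp
    _ ≤ ENNReal.ofReal ε + ENNReal.ofReal (1 - ε) := ENNReal.ofReal_add_le
    _ ≤ ENNReal.ofReal ε + μ s := by gcongr

lemma one_sub_le_measure_of_measure_compl_le [IsProbabilityMeasure μ] {s : Set Ω} {x : ℝ≥0∞}
    (h : μ sᶜ ≤ x) : 1 - x ≤ μ s := by
  rw [tsub_le_iff_right]
  calc (1 : ℝ≥0∞) = μ (s ∪ sᶜ) := by simp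
    _ ≤ μ s + μ sᶜ := measure_union_le _ _
    _ ≤ μ s + x := by gcongr

namespace KRangeIndep

variable {M K : ℕ} {G : Fin M → ℤ → Set Ω}

lemma measure_iInter_compl_le (hG : KRangeIndep K G μ) {δ : ℝ≥0∞}
    (hδ : ∀ i j, μ (G i j)ᶜ ≤ δ) (p : Fin M → ℤ) {T : Finset (Fin M)}
    (hT : ∀ i ∈ T, ∀ j ∈ T, i ≠ j → (K : ℤ) ≤ |((i : ℕ) : ℤ) - ((j : ℕ) : ℤ)|) :
    μ (⋂ i ∈ T, (G i (p i))ᶜ) ≤ δ ^ #T := by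
  set e : Fin #T ≃ T := T.equivFin.symm
  have hind := hG #T (fun a => (e a, p (e a))) fun a b hab =>
    hT _ (e a).2 _ (e b).2 (Subtype.coe_injective.ne (e.injective.ne hab))
  calc μ (⋂ i ∈ T, (G i (p i))ᶜ)
        ≤ μ (⋂ a ∈ (univ : Finset (Fin #T)), (G (e a) (p (e a)))ᶜ) :=
        measure_mono (Set.subset_iInter₂ fun a _ => Set.biInter_subset_of_mem (e a).2)
    _ = ∏ a, μ (G (e a) (p (e a)))ᶜ := (iIndepSet_iff _ _).1 hind univ
        fun _ _ => (MeasurableSpace.measurableSet_generateFrom (Set.mem_singleton _)).compl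
    _ ≤ ∏ _a : Fin #T, δ := prod_le_prod' fun a _ => hδ _ _
    _ = δ ^ #T := by simp

open scoped Classical in
lemma measure_setOf_mul_le_card_compl_le [NeZero K] (hG : KRangeIndep K G μ) {δ : ℝ≥0∞}
    (hδ : ∀ i j, μ (G i j)ᶜ ≤ δ) (p : Fin M → ℤ) (L : ℕ) :
    μ {ω | K * L ≤ #{i | ω ∈ (G i (p i))ᶜ}} ≤ 2 ^ M * δ ^ L := by
  simpa using measure_setOf_mul_le_card_le (fun i : Fin M => Fin.ofNat K i)
    (fun T hT => hG.measure_iInter_compl_le hδ p fun i hi j hj hij =>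
      le_abs_sub_of_mod_eq (Fin.val_ne_of_ne hij) (by simpa [Fin.ext_iff] using hT i hi j hj))
    L

open scoped Classical in
lemma measure_compl_setOf_le_sum_indicator_le [IsProbabilityMeasure μ] [NeZero K]
    (hGm : ∀ i j, MeasurableSet (G i j)) (hG : KRangeIndep K G μ)
    {ε : ℝ} (hε : 0 ≤ ε) (hGprob : ∀ i j, ENNReal.ofReal (1 - ε) ≤ μ (G i j))
    {J : Fin (M + 1) → Ω → ℤ} (hJ0 : ∀ ω, J 0 ω = 0) (h : ℝ) :
    μ {ω | (99 / 100 : ℝ) * M ≤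
        ∑ i : Fin M, (G i (J i.succ ω)).indicator (fun _ => (1 : ℝ)) ω}ᶜ ≤
      μ {ω | h ≤ ((∑ i : Fin M, |J i.succ ω - J i.castSucc ω| : ℤ) : ℝ)} +
      ENNReal.ofReal (2 ^ ⌈h⌉₊ * 4 ^ M * 2 ^ M * ε ^ (M / (100 * K))) := by
  set L := M / (100 * K)
  set A := {ω | h ≤ ((∑ i : Fin M, |J i.succ ω - J i.castSucc ω| : ℤ) : ℝ)}
  set ball := latticeL1Ball (Fin M) ⌈h⌉₊
  have hδ : ∀ i j, μ (G i j)ᶜ ≤ ENNReal.ofReal ε := fun i j =>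
    measure_compl_le_ofReal (hGm i j) (hGprob i j)
  calc _ ≤ μ A + ∑ d ∈ ball,
          μ {ω | K * L ≤ #{i | ω ∈ (G i (Fin.partialSum d i.succ))ᶜ}} :=
        (measure_mono (compl_setOf_le_sum_indicator_subset hJ0 h)).trans
          ((measure_union_le _ _).trans (add_le_add le_rfl (measure_biUnion_finset_le _ _)))
    _ ≤ μ A + ∑ _d ∈ ball, 2 ^ M * ENNReal.ofReal ε ^ L := by
        gcongr with d
        exact hG.measure_setOf_mul_le_card_compl_le hδ _ L
    _ = μ A + ENNReal.ofReal (#ball * 2 ^ M * ε ^ L) := by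
        rw [sum_const, nsmul_eq_mul, ENNReal.ofReal_mul (by positivity),
          ENNReal.ofReal_mul (by positivity), ENNReal.ofReal_pow hε,
          ENNReal.ofReal_pow zero_le_two]
        simp [mul_assoc]
    _ ≤ _ := by
        gcongr
        simpa using card_latticeL1Ball_le (Fin M) ⌈h⌉₊

end KRangeIndep

end KRangeIndependence

/-- `N ≤ H₀ M + 1` and `100 K (L + 1) > M` make the exponent `N + 3M - βL` at most
`1 + β - M`. -/
lemma two_pow_mul_exp_neg_pow_le {K M : ℕ} (hK : 0 < K) {H₀ : ℝ} (hH₀ : 0 ≤ H₀) :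
    (2 : ℝ) ^ ⌈H₀ * M⌉₊ * 4 ^ M * 2 ^ M * exp (-(100 * K * (H₀ + 4))) ^ (M / (100 * K)) ≤
      exp (1 + 100 * K * (H₀ + 4)) * exp (-M) := by
  set β : ℝ := 100 * K * (H₀ + 4)
  set L := M / (100 * K)
  set N := ⌈H₀ * M⌉₊
  have hN : (N : ℝ) ≤ H₀ * M + 1 := (Nat.ceil_lt_add_one (by positivity)).le
  have hL : (M : ℝ) ≤ 100 * K * (L + 1) := by
    exact_mod_cast (Nat.lt_mul_div_succ M (by positivity : 0 < 100 * K)).le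
  have hβL : (H₀ + 4) * M ≤ β * L + β := by
    calc (H₀ + 4) * M ≤ (H₀ + 4) * (100 * K * (L + 1)) := by gcongr
      _ = β * L + β := by ring
  have h2 : (2 : ℝ) ^ (N + 3 * M) ≤ exp (N + 3 * M : ℕ) := by
    rw [← mul_one ((N + 3 * M : ℕ) : ℝ), exp_nat_mul]
    exact pow_le_pow_left₀ zero_le_two (by linarith [add_one_le_exp (1 : ℝ)]) _
  calc (2 : ℝ) ^ N * 4 ^ M * 2 ^ M * exp (-β) ^ L = 2 ^ (N + 3 * M) * exp (-(β * L)) := by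
        rw [← exp_nat_mul, show (4 : ℝ) ^ M = 2 ^ (2 * M) by rw [pow_mul]; norm_num]
        ring_nf
    _ ≤ exp (N + 3 * M : ℕ) * exp (-(β * L)) := by gcongr
    _ ≤ exp (1 + β) * exp (-M) := by
        rw [← exp_add, ← exp_add]
        push_cast
        exact exp_le_exp.2 (by linarith)

lemma exists_exp_add_le {c' s : ℝ} (hc' : 0 < c') (hs : 0 < s) (hs1 : s ≤ 1) {C : ℝ}
    (hC : 0 ≤ C) :
    ∃ c > 0, ∀ᶠ M : ℕ in atTop, exp (-c' * M ^ s) + C * exp (-M) ≤ exp (-c * M ^ s) := by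
  set a := min c' 1
  have ha : 0 < a := lt_min hc' one_pos
  refine ⟨a / 2, by positivity, ?_⟩
  have ht : Tendsto (fun M : ℕ => (M : ℝ) ^ s) atTop atTop :=
    (tendsto_rpow_atTop hs).comp tendsto_natCast_atTop_atTop
  filter_upwards [ht.eventually_ge_atTop (log (1 + C) / (a / 2)), eventually_ge_atTop 1]
    with M hMt hM1
  set t := (M : ℝ) ^ s
  have ht0 : 0 ≤ t := by positivity
  have htM : t ≤ M := by
    simpa using rpow_le_rpow_of_exponent_le (by exact_mod_cast hM1 : (1 : ℝ) ≤ M) hs1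
  have hC' : 1 + C ≤ exp (a / 2 * t) :=
    (log_le_iff_le_exp (by linarith)).1 (by rwa [div_le_iff₀ (by positivity), mul_comm] at hMt)
  calc exp (-c' * t) + C * exp (-M) ≤ exp (-a * t) + C * exp (-a * t) := by
        gcongr
        · nlinarith [min_le_left c' 1]
        · nlinarith [min_le_right c' 1]
    _ = (1 + C) * exp (-(a / 2) * t) * exp (-(a / 2) * t) := by
        rw [mul_assoc, ← exp_add]
        ring_nf
    _ ≤ exp (a / 2 * t) * exp (-(a / 2) * t) * exp (-(a / 2) * t) := by gcongr
    _ = exp (-(a / 2) * t) := by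
        rw [← exp_add]
        ring_nf
        simp

theorem statement7 (K : ℕ) (H₀ : ℝ) (hK : 1 ≤ K) (hH₀ : 0 < H₀) :
    ∃ ε : ℝ, 0 < ε ∧
      ∀ c' θ : ℝ, 0 < c' → 0 < θ → θ < 1 →
      ∃ c : ℝ, 0 < c ∧ ∃ M₀ : ℕ,
        ∀ M : ℕ, M₀ ≤ M →
        ∀ (Ω : Type) [MeasureSpace Ω], IsProbabilityMeasure (ℙ : Measure Ω) →
        ∀ G : Fin M → ℤ → Set Ω,
        (∀ i j, MeasurableSet (G i j)) →
        -- K-range independence property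
        (∀ (r : ℕ) (s : Fin r → Fin M × ℤ),
          (∀ a b, a ≠ b → (K : ℤ) ≤ |(((s a).1 : ℕ) : ℤ) - (((s b).1 : ℕ) : ℤ)|) →
          iIndepSet (fun a => G (s a).1 (s a).2) ℙ) →
        (∀ (i : Fin M) (j : ℤ), ENNReal.ofReal (1 - ε) ≤ ℙ (G i j)) →
        ∀ J : Fin (M + 1) → Ω → ℤ,
        (∀ i, Measurable (J i)) →
        (∀ ω, J 0 ω = 0) →
        ℙ {ω | H₀ * M ≤ ((∑ i : Fin M, |J i.succ ω - J i.castSucc ω| : ℤ) : ℝ)} ≤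
          ENNReal.ofReal (Real.exp (-c' * (M : ℝ) ^ (θ / 4))) →
        1 - ENNReal.ofReal (Real.exp (-c * (M : ℝ) ^ (θ / 4))) ≤
          ℙ {ω | (99 / 100 : ℝ) * M ≤
              ∑ i : Fin M, (G i (J i.succ ω)).indicator (fun _ => (1 : ℝ)) ω} := by
  have : NeZero K := ⟨by omega⟩
  set β : ℝ := 100 * K * (H₀ + 4)
  refine ⟨exp (-β), exp_pos _, fun c' θ hc' hθ hθ1 => ?_⟩
  obtain ⟨c, hc, hev⟩ := exists_exp_add_le hc' (by positivity : 0 < θ / 4) (by linarith)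
    (exp_pos (1 + β)).le
  obtain ⟨M₀, hM₀⟩ := eventually_atTop.1 hev
  refine ⟨c, hc, M₀, fun M hM Ω _ _ G hGm hG hGprob J _ hJ0 hA => ?_⟩
  refine one_sub_le_measure_of_measure_compl_le ?_
  calc _ ≤ ℙ {ω | H₀ * M ≤ ((∑ i : Fin M, |J i.succ ω - J i.castSucc ω| : ℤ) : ℝ)} +
        ENNReal.ofReal (2 ^ ⌈H₀ * M⌉₊ * 4 ^ M * 2 ^ M * exp (-β) ^ (M / (100 * K))) :=
        KRangeIndep.measure_compl_setOf_le_sum_indicator_le hGm hG (exp_pos _).le hGprob hJ0 _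
    _ ≤ ENNReal.ofReal (exp (-c' * M ^ (θ / 4))) + ENNReal.ofReal (exp (1 + β) * exp (-M)) :=
        add_le_add hA <| ENNReal.ofReal_le_ofReal <| two_pow_mul_exp_neg_pow_le (by omega) hH₀.le
    _ ≤ ENNReal.ofReal (exp (-c * M ^ (θ / 4))) := by
        rw [← ENNReal.ofReal_add (by positivity) (by positivity)]
        exact ENNReal.ofReal_le_ofReal (hM₀ M hM)
end

section
/- Let α > 0 and δ ∈ (0, 1) with 2·δ^α < 1/2. Let Q : [1, ∞) → (0, ∞) satisfy Q(m) ≤ (m/n)^α·Q(n) whenever 1 ≤ m ≤ n. Let A : [1, ∞) → [0, ∞) be bounded on bounded sets, and suppose there are n⋆ ≥ 1/δ and c₀ > 0 such that A(n') ≤ 2·sup_{1 ≤ m ≤ δ·n'} A(m) + c₀·Q(n') for every n' ≥ n⋆. Then there exists a constant D₁ > 0 such that A(n) ≤ D₁·Q(n) for all n ≥ 1. -/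
/-!
Induction over the scales `n ≤ nstar / δ ^ k`. Below `nstar` the bound holds with any
`D₁ ≥ sup A / Q 1`, since `Q` is increasing. Above it, if `A ≤ D₁ Q` on `[1, δ n]` then the
growth condition on `Q` gives `sup_{[1, δ n]} A ≤ D₁ δ ^ α Q n`, so the recursion yields
`A n ≤ 2 δ ^ α D₁ Q n + c₀ Q n ≤ D₁ Q n` as soon as `D₁ ≥ 2 c₀`, because `2 δ ^ α < 1 / 2`.
-/

open Set

theorem Real.forall_of_forall_le_mul_imp {P : ℝ → Prop} {δ N : ℝ} (hδ0 : 0 < δ) (hδ1 : δ < 1)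
    (hN : 0 < N) (base : ∀ n ≤ N, P n) (step : ∀ n, N < n → (∀ m ≤ δ * n, P m) → P n)
    (n : ℝ) : P n := by
  have scale : ∀ k : ℕ, ∀ n ≤ N / δ ^ k, P n := by
    intro k
    induction k with
    | zero => simpa using base
    | succ k ih =>
      intro n hn
      rcases le_or_gt n N with hnN | hnN
      · exact base n hnN
      refine step n hnN fun m hm => ih m (hm.trans ?_)
      rw [pow_succ, ← div_div] at hn
      exact (le_div_iff₀' hδ0).1 hn
  rcases le_or_gt n N with hnN | hnN
  · exact base n hnN
  have hn0 : 0 < n := hN.trans hnN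
  obtain ⟨k, hk⟩ := exists_pow_lt_of_lt_one (div_pos hN hn0) hδ1
  exact scale k n ((le_div_iff₀ (by positivity)).2 ((lt_div_iff₀' hn0).1 hk).le)

section Growth

variable {α : ℝ} {Q : ℝ → ℝ} (hα : 0 ≤ α)
  (hQ : ∀ m n : ℝ, 1 ≤ m → m ≤ n → Q m ≤ (m / n) ^ α * Q n)
include hα hQ

theorem apply_le_rpow_mul_of_le_mul {c m n : ℝ} (hc0 : 0 ≤ c) (hc1 : c ≤ 1) (hQn : 0 ≤ Q n)
    (hm : 1 ≤ m) (hmn : m ≤ c * n) : Q m ≤ c ^ α * Q n := by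
  have hn0 : 0 < n := pos_of_mul_pos_right (one_pos.trans_le (hm.trans hmn)) hc0
  have hm_le_n : m ≤ n := hmn.trans (mul_le_of_le_one_left hn0.le hc1)
  have hratio : (m / n) ^ α ≤ c ^ α :=
    Real.rpow_le_rpow (by positivity) ((div_le_iff₀ hn0).2 hmn) hα
  exact (hQ m n hm hm_le_n).trans (mul_le_mul_of_nonneg_right hratio hQn)

theorem apply_le_apply_of_le {m n : ℝ} (hQn : 0 ≤ Q n) (hm : 1 ≤ m) (hmn : m ≤ n) :
    Q m ≤ Q n := by
  simpa using apply_le_rpow_mul_of_le_mul hα hQ zero_le_one le_rfl hQn hm (by simpa using hmn)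

theorem le_mul_of_le_two_mul_sSup_add {A : ℝ → ℝ} {δ c₀ D n : ℝ} (hδ0 : 0 < δ) (hδ1 : δ ≤ 1)
    (hδα : 2 * δ ^ α < 1 / 2) (hD : 2 * c₀ ≤ D) (hD0 : 0 ≤ D) (hQn : 0 < Q n)
    (hδn : 1 ≤ δ * n) (hrec : A n ≤ 2 * sSup (A '' Icc 1 (δ * n)) + c₀ * Q n)
    (hA : ∀ m ∈ Icc 1 (δ * n), A m ≤ D * Q m) :
    A n ≤ D * Q n := by
  have hsup : sSup (A '' Icc 1 (δ * n)) ≤ D * (δ ^ α * Q n) := by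
    refine csSup_le ((nonempty_Icc.2 hδn).image A) (forall_mem_image.2 fun m hm => ?_)
    exact (hA m hm).trans <| mul_le_mul_of_nonneg_left
      (apply_le_rpow_mul_of_le_mul hα hQ hδ0.le hδ1 hQn.le hm.1 hm.2) hD0
  nlinarith [mul_le_mul_of_nonneg_left (mul_le_mul_of_nonneg_right hδα.le hQn.le) hD0]

end Growth

theorem statement10_general (α δ : ℝ) (hα : 0 < α) (hδ0 : 0 < δ) (hδ1 : δ < 1)
    (hδα : 2 * δ ^ α < 1 / 2)
    (Q A : ℝ → ℝ)
    (hQpos : ∀ n : ℝ, 1 ≤ n → 0 < Q n)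
    (hQmono : ∀ m n : ℝ, 1 ≤ m → m ≤ n → Q m ≤ (m / n) ^ α * Q n)
    (hAbdd : ∀ b : ℝ, ∃ B : ℝ, ∀ x : ℝ, 1 ≤ x → x ≤ b → A x ≤ B)
    (nstar c₀ : ℝ) (hnstar : 1 / δ ≤ nstar) (hc₀ : 0 < c₀)
    (hrec : ∀ n' : ℝ, nstar ≤ n' →
      A n' ≤ 2 * sSup (A '' Set.Icc 1 (δ * n')) + c₀ * Q n') :
    ∃ D₁ : ℝ, 0 < D₁ ∧ ∀ n : ℝ, 1 ≤ n → A n ≤ D₁ * Q n := by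
  obtain ⟨B, hB⟩ := hAbdd nstar
  have hnstar0 : 0 < nstar := (one_div_pos.2 hδ0).trans_le hnstar
  set D₁ := max (B / Q 1) (2 * c₀)
  have hD₁pos : 0 < D₁ := lt_max_of_lt_right (by positivity)
  refine ⟨D₁, hD₁pos, fun n => ?_⟩
  refine Real.forall_of_forall_le_mul_imp (P := fun n => 1 ≤ n → A n ≤ D₁ * Q n) hδ0 hδ1 hnstar0
    (fun n hn h1 => ?_) (fun n hn ih h1 => ?_) n
  · have hQ1 := hQpos 1 le_rfl
    calc A n ≤ B / Q 1 * Q 1 := (hB n h1 hn).trans_eq (div_mul_cancel₀ B hQ1.ne').symm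
      _ ≤ D₁ * Q n :=
        mul_le_mul (le_max_left _ _) (apply_le_apply_of_le hα.le hQmono (hQpos n h1).le le_rfl h1)
          hQ1.le hD₁pos.le
  · have hδn : 1 ≤ δ * n := by
      rw [div_le_iff₀ hδ0] at hnstar
      nlinarith
    exact le_mul_of_le_two_mul_sSup_add hα.le hQmono hδ0 hδ1.le hδα (le_max_right _ _)
      hD₁pos.le (hQpos n h1) hδn (hrec n hn.le) fun m hm => ih m hm.2 hm.1

theorem statement10 (α δ : ℝ) (hα : 0 < α) (hδ0 : 0 < δ) (hδ1 : δ < 1)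
    (hδα : 2 * δ ^ α < 1 / 2)
    (Q A : ℝ → ℝ)
    (hQpos : ∀ n : ℝ, 1 ≤ n → 0 < Q n)
    (hQmono : ∀ m n : ℝ, 1 ≤ m → m ≤ n → Q m ≤ (m / n) ^ α * Q n)
    (hA0 : ∀ n : ℝ, 1 ≤ n → 0 ≤ A n)
    (hAbdd : ∀ b : ℝ, ∃ B : ℝ, ∀ x : ℝ, 1 ≤ x → x ≤ b → A x ≤ B)
    (nstar c₀ : ℝ) (hnstar : 1 / δ ≤ nstar) (hc₀ : 0 < c₀)
    (hrec : ∀ n' : ℝ, nstar ≤ n' →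
      A n' ≤ 2 * sSup (A '' Set.Icc 1 (δ * n')) + c₀ * Q n') :
    ∃ D₁ : ℝ, 0 < D₁ ∧ ∀ n : ℝ, 1 ≤ n → A n ≤ D₁ * Q n :=
  statement10_general α δ hα hδ0 hδ1 hδα Q A hQpos hQmono hAbdd nstar c₀ hnstar hc₀ hrec
end

section
/- Let α ∈ (0,1), δ ∈ (0, 1/3], Ĉ ≥ 1 and n' ≥ 1. Let Q̂ : [1, ∞) → (0, ∞) be a function such that Q(n) := sup_{1 ≤ m ≤ n} (n/m)^α·Q̂(m) is finite for every n ≥ 1, and assume Q̂(2n) ≤ Ĉ·Q((1+δ)·n) for all n ≥ n'. Then, with D₆ = max{ 2·Ĉ·(3/2)^α, 2·Q(3n')/Q(1) }, one has Q((3/2)·m) ≤ D₆·Q(m) for all m ≥ 1. -/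
/-! For `m` below `2n'` the bound is monotonicity of `Q` up to `3n'`. For larger `m`, the
supremum defining `Q(3m/2)` splits at `m`: indices `k ≤ m` contribute at most `(3/2)^α Q(m)`,
and an index `k ∈ (m, 3m/2]` has `Q̂(k) ≤ Ĉ Q((1+δ)k/2) ≤ Ĉ Q(m)` because `δ ≤ 1/3` gives
`(1+δ)k/2 ≤ m`. -/

/-- The regularised scale `Q(n) = sup_{1 ≤ m ≤ n} (n/m)^α · Q̂(m)`. -/
noncomputable def Qreg (α : ℝ) (Qhat : ℝ → ℝ) (n : ℝ) : ℝ :=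
  sSup ((fun m => (n / m) ^ α * Qhat m) '' Set.Icc 1 n)

section

variable {α : ℝ} {Qhat : ℝ → ℝ}

lemma le_Qreg {n m : ℝ}
    (hbdd : BddAbove ((fun m => (n / m) ^ α * Qhat m) '' Set.Icc 1 n))
    (hm : m ∈ Set.Icc 1 n) : (n / m) ^ α * Qhat m ≤ Qreg α Qhat n :=
  le_csSup hbdd ⟨m, hm, rfl⟩

lemma Qhat_le_Qreg {n : ℝ}
    (hbdd : BddAbove ((fun m => (n / m) ^ α * Qhat m) '' Set.Icc 1 n)) (hn : 1 ≤ n) :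
    Qhat n ≤ Qreg α Qhat n := by
  simpa [div_self (by positivity : n ≠ 0)] using le_Qreg hbdd ⟨hn, le_rfl⟩

lemma Qreg_pos (hQpos : ∀ m : ℝ, 1 ≤ m → 0 < Qhat m)
    (hQbdd : ∀ n : ℝ, 1 ≤ n → BddAbove ((fun m => (n / m) ^ α * Qhat m) '' Set.Icc 1 n))
    {n : ℝ} (hn : 1 ≤ n) : 0 < Qreg α Qhat n :=
  (hQpos n hn).trans_le (Qhat_le_Qreg (hQbdd n hn) hn)

lemma monotoneOn_Qreg (hα : 0 ≤ α) (hQnonneg : ∀ m : ℝ, 1 ≤ m → 0 ≤ Qhat m)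
    (hQbdd : ∀ n : ℝ, 1 ≤ n → BddAbove ((fun m => (n / m) ^ α * Qhat m) '' Set.Icc 1 n)) :
    MonotoneOn (Qreg α Qhat) (Set.Ici 1) := by
  intro a (ha : 1 ≤ a) b (hb : 1 ≤ b) hab
  refine csSup_le ((Set.nonempty_Icc.2 ha).image _) ?_
  rintro _ ⟨k, hk, rfl⟩
  have hk0 : 0 < k := one_pos.trans_le hk.1
  calc (a / k) ^ α * Qhat k ≤ (b / k) ^ α * Qhat k := by
        gcongr
        exact hQnonneg k hk.1
    _ ≤ Qreg α Qhat b := le_Qreg (hQbdd b hb) ⟨hk.1, hk.2.trans hab⟩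

lemma Qreg_mul_le {c n B : ℝ} (hα : 0 ≤ α) (hc : 1 ≤ c) (hn : 1 ≤ n)
    (hQnonneg : ∀ k : ℝ, 1 ≤ k → 0 ≤ Qhat k)
    (hbdd : BddAbove ((fun m => (n / m) ^ α * Qhat m) '' Set.Icc 1 n))
    (hB : ∀ k : ℝ, n < k → k ≤ c * n → Qhat k ≤ B) :
    Qreg α Qhat (c * n) ≤ c ^ α * max (Qreg α Qhat n) B := by
  refine csSup_le ((Set.nonempty_Icc.2 (one_le_mul_of_one_le_of_one_le hc hn)).image _) ?_
  rintro _ ⟨k, hk, rfl⟩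
  have hk0 : 0 < k := one_pos.trans_le hk.1
  rcases le_or_gt k n with hkn | hnk
  · calc (c * n / k) ^ α * Qhat k = c ^ α * ((n / k) ^ α * Qhat k) := by
          rw [mul_div_assoc, Real.mul_rpow (by positivity) (by positivity), mul_assoc]
      _ ≤ c ^ α * max (Qreg α Qhat n) B := by
          gcongr
          exact (le_Qreg hbdd ⟨hk.1, hkn⟩).trans (le_max_left _ _)
  · have hQk := hQnonneg k hk.1
    calc (c * n / k) ^ α * Qhat k ≤ c ^ α * Qhat k := by
          gcongr
          rw [div_le_iff₀ hk0]
          nlinarith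
      _ ≤ c ^ α * max (Qreg α Qhat n) B := by
          gcongr
          exact (hB k hnk hk.2).trans (le_max_right _ _)

lemma Qreg_three_halves_mul_le {δ Chat n' m : ℝ} (hα : 0 ≤ α) (hδ0 : 0 < δ) (hδ1 : δ ≤ 1 / 3)
    (hChat : 1 ≤ Chat) (hn' : 1 ≤ n') (hQpos : ∀ m : ℝ, 1 ≤ m → 0 < Qhat m)
    (hQbdd : ∀ n : ℝ, 1 ≤ n → BddAbove ((fun m => (n / m) ^ α * Qhat m) '' Set.Icc 1 n))
    (hgrow : ∀ n : ℝ, n' ≤ n → Qhat (2 * n) ≤ Chat * Qreg α Qhat ((1 + δ) * n))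
    (hm : 2 * n' ≤ m) :
    Qreg α Qhat (3 / 2 * m) ≤ ((3 : ℝ) / 2) ^ α * (Chat * Qreg α Qhat m) := by
  have hm1 : 1 ≤ m := by linarith
  have hQnonneg : ∀ k : ℝ, 1 ≤ k → 0 ≤ Qhat k := fun k hk => (hQpos k hk).le
  have hB : ∀ k : ℝ, m < k → k ≤ 3 / 2 * m → Qhat k ≤ Chat * Qreg α Qhat m := by
    intro k hmk hk
    have hgrow_k := hgrow (k / 2) (by linarith)
    rw [mul_div_cancel₀ k two_ne_zero] at hgrow_k
    have hmid : Qreg α Qhat ((1 + δ) * (k / 2)) ≤ Qreg α Qhat m :=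
      monotoneOn_Qreg hα hQnonneg hQbdd (show (1 : ℝ) ≤ (1 + δ) * (k / 2) by nlinarith) hm1
        (by nlinarith)
    exact hgrow_k.trans (by gcongr)
  have hmax : max (Qreg α Qhat m) (Chat * Qreg α Qhat m) = Chat * Qreg α Qhat m :=
    max_eq_right (le_mul_of_one_le_left (Qreg_pos hQpos hQbdd hm1).le hChat)
  simpa only [hmax] using Qreg_mul_le hα (by norm_num) hm1 hQnonneg (hQbdd m hm1) hB

end

theorem statement11_general (α δ Chat n' : ℝ) (hα0 : 0 < α)
    (hδ0 : 0 < δ) (hδ1 : δ ≤ 1 / 3) (hChat : 1 ≤ Chat) (hn' : 1 ≤ n')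
    (Qhat : ℝ → ℝ)
    (hQpos : ∀ m : ℝ, 1 ≤ m → 0 < Qhat m)
    (hQbdd : ∀ n : ℝ, 1 ≤ n → BddAbove ((fun m => (n / m) ^ α * Qhat m) '' Set.Icc 1 n))
    (hgrow : ∀ n : ℝ, n' ≤ n → Qhat (2 * n) ≤ Chat * Qreg α Qhat ((1 + δ) * n)) :
    ∀ m : ℝ, 1 ≤ m →
      Qreg α Qhat (3 / 2 * m) ≤
        max (2 * Chat * ((3 : ℝ) / 2) ^ α) (2 * Qreg α Qhat (3 * n') / Qreg α Qhat 1) *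
          Qreg α Qhat m := by
  intro m hm
  have hQnonneg : ∀ k : ℝ, 1 ≤ k → 0 ≤ Qhat k := fun k hk => (hQpos k hk).le
  have hmono := monotoneOn_Qreg hα0.le hQnonneg hQbdd
  have hQm := Qreg_pos hQpos hQbdd hm
  rcases lt_or_ge m (2 * n') with hsmall | hlarge
  · have hQ1 := Qreg_pos hQpos hQbdd le_rfl
    have hQ1m : Qreg α Qhat 1 ≤ Qreg α Qhat m := hmono (le_refl (1 : ℝ)) hm hm
    have hQ3n' := Qreg_pos hQpos hQbdd (show (1 : ℝ) ≤ 3 * n' by linarith)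
    calc Qreg α Qhat (3 / 2 * m) ≤ Qreg α Qhat (3 * n') :=
          hmono (show (1 : ℝ) ≤ 3 / 2 * m by linarith) (show (1 : ℝ) ≤ 3 * n' by linarith)
            (by linarith)
      _ ≤ 2 * Qreg α Qhat (3 * n') / Qreg α Qhat 1 * Qreg α Qhat m := by
          rw [div_mul_eq_mul_div, le_div_iff₀ hQ1]
          nlinarith
      _ ≤ _ := by gcongr; exact le_max_right _ _
  · calc Qreg α Qhat (3 / 2 * m) ≤ ((3 : ℝ) / 2) ^ α * (Chat * Qreg α Qhat m) :=
          Qreg_three_halves_mul_le hα0.le hδ0 hδ1 hChat hn' hQpos hQbdd hgrow hlarge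
      _ ≤ 2 * Chat * ((3 : ℝ) / 2) ^ α * Qreg α Qhat m := by
          have : 0 ≤ ((3 : ℝ) / 2) ^ α * (Chat * Qreg α Qhat m) := by positivity
          nlinarith
      _ ≤ _ := by gcongr; exact le_max_left _ _

theorem statement11 (α δ Chat n' : ℝ) (hα0 : 0 < α) (hα1 : α < 1)
    (hδ0 : 0 < δ) (hδ1 : δ ≤ 1 / 3) (hChat : 1 ≤ Chat) (hn' : 1 ≤ n')
    (Qhat : ℝ → ℝ)
    (hQpos : ∀ m : ℝ, 1 ≤ m → 0 < Qhat m)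
    (hQbdd : ∀ n : ℝ, 1 ≤ n → BddAbove ((fun m => (n / m) ^ α * Qhat m) '' Set.Icc 1 n))
    (hgrow : ∀ n : ℝ, n' ≤ n → Qhat (2 * n) ≤ Chat * Qreg α Qhat ((1 + δ) * n)) :
    ∀ m : ℝ, 1 ≤ m →
      Qreg α Qhat (3 / 2 * m) ≤
        max (2 * Chat * ((3 : ℝ) / 2) ^ α) (2 * Qreg α Qhat (3 * n') / Qreg α Qhat 1) *
          Qreg α Qhat m :=
  statement11_general α δ Chat n' hα0 hδ0 hδ1 hChat hn' Qhat hQpos hQbdd hgrow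
end

section
/- Let θ ∈ (0,1), Q > 0 and K ≥ 1. Let X be a real random variable such that ℙ(|X − 𝔼X| > t·Q) ≤ exp(1 − t^θ) for all t > 0, and suppose that ℙ(|X − 𝔼X| > x⋆·Q) = exp(1 − x⋆^θ) for some x⋆ ∈ [1, K]. Let δ > 0 satisfy δ < (1/2)·exp(1 − K^θ) and ∫₀^∞ min(δ, exp(1 − t^θ)) dt < (1/3)·exp(1 − K^θ). Then ℙ(|X − y| ≤ Q/3) ≤ 1 − δ for every y ∈ ℝ. -/
/-!
Normalise to `V = (X - 𝔼X) / Q`. If `ℙ(|V - c| ≤ 1/3) > 1 - δ`, the event `A = {|V - c| ≤ 1/3}`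
meets `T = {|V| > x⋆}`, since `ℙ T ≥ exp(1 - K^θ) > 2δ`; say `V ω₀ > x⋆` at a common point `ω₀`.
Then `V ≥ x⋆ - 2/3 ≥ 1/3` on `A` and `V > x⋆ ≥ 1` on `A ∩ T`, so
`𝔼[V; A] ≥ (1 - δ)/3 + 2 (exp(1 - K^θ) - δ)/3`. As `𝔼V = 0`, this is at most
`𝔼[|V|; Aᶜ] = ∫₀^∞ ℙ(Aᶜ ∩ {|V| > t}) dt ≤ ∫₀^∞ min(δ, exp(1 - t^θ)) dt < exp(1 - K^θ)/3`,
which is a contradiction.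
-/

open MeasureTheory Real Set

lemma integrableOn_exp_one_sub_rpow {θ : ℝ} (hθ : 0 < θ) :
    IntegrableOn (fun t : ℝ => exp (1 - t ^ θ)) (Ioi 0) := by
  refine IntegrableOn.congr_fun ((integrableOn_rpow_mul_exp_neg_rpow (s := 0) (by norm_num)
    hθ).const_mul (exp 1)) (fun t _ => ?_) measurableSet_Ioi
  rw [rpow_zero, one_mul, sub_eq_add_neg, exp_add]

section

variable {Ω : Type*} [MeasurableSpace Ω] {μ : Measure Ω} {V : Ω → ℝ}

lemma setLIntegral_abs_le_of_tail_le (hV : AEMeasurable V μ) {S : Set Ω} {c : ENNReal}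
    (hS : μ S ≤ c) {g : ℝ → ENNReal} (hg : ∀ t > 0, μ {ω | t < |V ω|} ≤ g t) :
    ∫⁻ ω in S, ENNReal.ofReal |V ω| ∂μ ≤ ∫⁻ t in Ioi 0, min c (g t) := by
  rw [lintegral_eq_lintegral_meas_lt _ (ae_of_all _ fun ω => abs_nonneg _) hV.abs.restrict]
  refine setLIntegral_mono' measurableSet_Ioi fun t ht => le_min ?_ ?_
  · exact (measure_mono (subset_univ _)).trans (Measure.restrict_apply_univ S ▸ hS)
  · exact (Measure.restrict_le_self _).trans (hg t ht)

variable {g : ℝ → ℝ}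

lemma integrable_of_tail_le (hV : AEMeasurable V μ) (hg : IntegrableOn g (Ioi 0))
    (htail : ∀ t > 0, μ {ω | t < |V ω|} ≤ ENNReal.ofReal (g t)) : Integrable V μ := by
  refine ⟨hV.aestronglyMeasurable, ?_⟩
  have h := setLIntegral_abs_le_of_tail_le hV (le_top : μ univ ≤ ⊤) htail
  simp only [Measure.restrict_univ, min_eq_right le_top] at h
  rw [hasFiniteIntegral_iff_norm]
  calc ∫⁻ ω, ENNReal.ofReal ‖V ω‖ ∂μ ≤ ∫⁻ t in Ioi 0, ENNReal.ofReal (g t) := h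
    _ ≤ ∫⁻ t in Ioi 0, ‖g t‖ₑ := lintegral_mono fun t => ofReal_le_enorm _
    _ < ⊤ := hg.2

lemma setIntegral_abs_le_integral_min_of_tail_le [IsFiniteMeasure μ] (hV : AEMeasurable V μ)
    (hg : IntegrableOn g (Ioi 0)) (hg0 : ∀ t, 0 ≤ g t)
    (htail : ∀ t > 0, μ {ω | t < |V ω|} ≤ ENNReal.ofReal (g t)) {S : Set Ω} {δ : ℝ}
    (hS : μ.real S ≤ δ) : ∫ ω in S, |V ω| ∂μ ≤ ∫ t in Ioi 0, min δ (g t) := by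
  have hδ : 0 ≤ δ := measureReal_nonneg.trans hS
  have hmin : IntegrableOn (fun t => min δ (g t)) (Ioi 0) :=
    hg.mono' (aestronglyMeasurable_const.inf hg.1) (ae_of_all _ fun t => by
      rw [norm_of_nonneg (le_min hδ (hg0 t))]; exact min_le_right _ _)
  rw [integral_eq_lintegral_of_nonneg_ae (ae_of_all _ fun ω => abs_nonneg _)
    hV.abs.aestronglyMeasurable.restrict]
  refine ENNReal.toReal_le_of_le_ofReal (integral_nonneg fun t => le_min hδ (hg0 t)) ?_
  rw [ofReal_integral_eq_lintegral_ofReal hmin (ae_of_all _ fun t => le_min hδ (hg0 t))]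
  simp_rw [ENNReal.ofReal_min]
  exact setLIntegral_abs_le_of_tail_le hV
    ((ENNReal.le_ofReal_iff_toReal_le (measure_ne_top _ _) hδ).2 hS) htail

lemma le_setIntegral_abs_compl_of_integral_eq_zero [IsFiniteMeasure μ] (hV : Integrable V μ)
    (hV0 : ∫ ω, V ω ∂μ = 0) {A B : Set Ω} (hA : MeasurableSet A) (hB : MeasurableSet B)
    (hBA : B ⊆ A) {a b : ℝ} (hVA : ∀ ω ∈ A, a ≤ V ω) (hVB : ∀ ω ∈ B, b ≤ V ω) :
    a * μ.real A + (b - a) * μ.real B ≤ ∫ ω in Aᶜ, |V ω| ∂μ := by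
  have hAB := setIntegral_ge_of_const_le_real (hA.diff hB) (measure_ne_top _ _)
    (fun ω hω => hVA ω hω.1) hV.integrableOn
  have hB' := setIntegral_ge_of_const_le_real hB (measure_ne_top _ _) hVB hV.integrableOn
  have hsplit : ∫ ω in A, V ω ∂μ = ∫ ω in A \ B, V ω ∂μ + ∫ ω in B, V ω ∂μ := by
    rw [← setIntegral_union disjoint_sdiff_left hB hV.integrableOn hV.integrableOn,
      sdiff_union_of_subset hBA]
  have hcompl : ∫ ω in A, V ω ∂μ + ∫ ω in Aᶜ, V ω ∂μ = 0 := by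
    rw [integral_add_compl hA hV, hV0]
  have habs : -∫ ω in Aᶜ, V ω ∂μ ≤ ∫ ω in Aᶜ, |V ω| ∂μ :=
    (neg_le_abs _).trans abs_integral_le_integral_abs
  rw [measureReal_sdiff hBA hB] at hAB
  linarith

lemma le_setIntegral_abs_compl_of_abs_sub_le [IsFiniteMeasure μ] (hV : Integrable V μ)
    (hVm : Measurable V) (hV0 : ∫ ω, V ω ∂μ = 0) {A : Set Ω} (hA : MeasurableSet A)
    {x r : ℝ} (hr : r ≤ 2 * x) {ω₀ : Ω} (hω₀ : x < |V ω₀|)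
    (hAω₀ : ∀ ω ∈ A, |V ω - V ω₀| ≤ r) :
    (x - r) * μ.real A + r * μ.real (A ∩ {ω | x < |V ω|}) ≤ ∫ ω in Aᶜ, |V ω| ∂μ := by
  wlog hpos : x < V ω₀ generalizing V
  · have h := this hV.neg hVm.neg (by simp [integral_neg, hV0])
      (by simpa only [Pi.neg_apply, abs_neg] using hω₀)
      (fun ω hω => by
        rw [Pi.neg_apply, Pi.neg_apply, neg_sub_neg, abs_sub_comm]; exact hAω₀ ω hω)
      ((lt_abs.mp hω₀).resolve_left hpos)
    simpa only [Pi.neg_apply, abs_neg] using h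
  have hVA : ∀ ω ∈ A, x - r ≤ V ω := fun ω hω => by
    linarith [(abs_le.mp (hAω₀ ω hω)).1]
  have hVB : ∀ ω ∈ A ∩ {ω | x < |V ω|}, x ≤ V ω := fun ω ⟨hωA, hωx⟩ => by
    rcases lt_abs.mp (show x < |V ω| from hωx) with h | h
    · exact h.le
    · linarith [hVA ω hωA]
  have h := le_setIntegral_abs_compl_of_integral_eq_zero hV hV0 hA
    (hA.inter (measurableSet_lt measurable_const hVm.abs)) inter_subset_left hVA hVB
  rwa [sub_sub_cancel] at h

lemma integral_sub_integral_div_eq_zero [IsProbabilityMeasure μ] {X : Ω → ℝ} {Q : ℝ}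
    (hQ : Q ≠ 0) (h : Integrable (fun ω => (X ω - ∫ ω', X ω' ∂μ) / Q) μ) :
    ∫ ω, (X ω - ∫ ω', X ω' ∂μ) / Q ∂μ = 0 := by
  have hX : Integrable X μ := ((h.const_mul Q).add (integrable_const (∫ ω', X ω' ∂μ))).congr
    (ae_of_all _ fun ω => by simp [mul_div_cancel₀ _ hQ])
  rw [integral_div, integral_sub hX (integrable_const _), integral_const, probReal_univ,
    one_smul, sub_self, zero_div]

theorem measure_abs_sub_le_le_of_tail_le [IsProbabilityMeasure μ] (hVm : Measurable V)
    (hV0 : ∫ ω, V ω ∂μ = 0) (hg : IntegrableOn g (Ioi 0)) (hg0 : ∀ t, 0 ≤ g t)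
    (htail : ∀ t > 0, μ {ω | t < |V ω|} ≤ ENNReal.ofReal (g t)) {x E δ : ℝ} (hx : 1 ≤ x)
    (hE : E ≤ μ.real {ω | x < |V ω|}) (hδ : δ < E / 2)
    (hgδ : ∫ t in Ioi 0, min δ (g t) < E / 3) (c : ℝ) :
    μ {ω | |V ω - c| ≤ 1 / 3} ≤ ENNReal.ofReal (1 - δ) := by
  set A := {ω | |V ω - c| ≤ 1 / 3}
  set T := {ω | x < |V ω|}
  have hA : MeasurableSet A := measurableSet_le (by fun_prop) measurable_const
  have hT1 : μ.real T ≤ 1 := measureReal_le_one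
  by_contra! hconc
  have hAc : μ.real Aᶜ < δ := by
    rw [probReal_compl_eq_one_sub hA]
    linarith [measureReal_def μ A ▸
      (ENNReal.ofReal_lt_iff_lt_toReal (by linarith) (measure_ne_top _ _)).1 hconc]
  have hB : E - δ < μ.real (A ∩ T) := by
    have hcover : T ⊆ (A ∩ T) ∪ Aᶜ := fun ω hω => by by_cases h : ω ∈ A <;> simp [h, hω]
    linarith [(measureReal_mono (μ := μ) hcover).trans (measureReal_union_le _ _)]
  obtain ⟨ω₀, hω₀A, hω₀T⟩ : (A ∩ T).Nonempty :=
    nonempty_of_measure_ne_zero fun h0 => by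
      rw [measureReal_def, h0, ENNReal.toReal_zero] at hB
      linarith [measureReal_nonneg (μ := μ) (s := Aᶜ)]
  have hnear : ∀ ω ∈ A, |V ω - V ω₀| ≤ 2 / 3 := fun ω (hω : |V ω - c| ≤ 1 / 3) => by
    have h₀ : |V ω₀ - c| ≤ 1 / 3 := hω₀A
    linarith [abs_sub_le (V ω) c (V ω₀), abs_sub_comm (V ω₀) c]
  have hmass := le_setIntegral_abs_compl_of_abs_sub_le (integrable_of_tail_le hVm.aemeasurable
    hg htail) hVm hV0 hA (r := 2 / 3) (by linarith) hω₀T hnear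
  have htailA := setIntegral_abs_le_integral_min_of_tail_le hVm.aemeasurable hg hg0 htail hAc.le
  have hAx : μ.real A / 3 ≤ (x - 2 / 3) * μ.real A := by
    nlinarith [measureReal_nonneg (μ := μ) (s := A)]
  linarith [probReal_compl_eq_one_sub (μ := μ) hA]

end

open scoped ProbabilityTheory

theorem statement12_general (θ Q K : ℝ) (hθ0 : 0 < θ) (hQ : 0 < Q)
    (Ω : Type) [MeasureSpace Ω] (hprob : IsProbabilityMeasure (ℙ : Measure Ω))
    (X : Ω → ℝ) (hX : Measurable X)
    (htail : ∀ t : ℝ, 0 < t →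
      ℙ {ω | t * Q < |X ω - ∫ ω', X ω'|} ≤ ENNReal.ofReal (Real.exp (1 - t ^ θ)))
    (xstar : ℝ) (hx1 : 1 ≤ xstar) (hxK : xstar ≤ K)
    (heq : ℙ {ω | xstar * Q < |X ω - ∫ ω', X ω'|} = ENNReal.ofReal (Real.exp (1 - xstar ^ θ)))
    (δ : ℝ) (hδ1 : δ < (1 / 2) * Real.exp (1 - K ^ θ))
    (hδint : (∫ t in Set.Ioi (0 : ℝ), min δ (Real.exp (1 - t ^ θ))) <
      (1 / 3) * Real.exp (1 - K ^ θ)) :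
    ∀ y : ℝ, ℙ {ω | |X ω - y| ≤ Q / 3} ≤ ENNReal.ofReal (1 - δ) := by
  intro y
  set V : Ω → ℝ := fun ω => (X ω - ∫ ω', X ω') / Q
  have hlevel : ∀ t, {ω | t < |V ω|} = {ω | t * Q < |X ω - ∫ ω', X ω'|} := fun t => by
    ext ω; simp [V, abs_div, abs_of_pos hQ, lt_div_iff₀ hQ]
  have hVm : Measurable V := by fun_prop
  have hVtail : ∀ t > 0, ℙ {ω | t < |V ω|} ≤ ENNReal.ofReal (exp (1 - t ^ θ)) :=
    fun t ht => hlevel t ▸ htail t ht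
  have hg := integrableOn_exp_one_sub_rpow hθ0
  have hV0 := integral_sub_integral_div_eq_zero hQ.ne'
    (integrable_of_tail_le hVm.aemeasurable hg hVtail)
  have hE : exp (1 - K ^ θ) ≤ (ℙ : Measure Ω).real {ω | xstar < |V ω|} := by
    rw [measureReal_def, hlevel, heq, ENNReal.toReal_ofReal (exp_pos _).le]
    gcongr
  have h := measure_abs_sub_le_le_of_tail_le hVm hV0 hg (fun t => (exp_pos _).le) hVtail hx1 hE
    (δ := δ) (by linarith) (by linarith) ((y - ∫ ω', X ω') / Q)
  convert h using 2
  ext ω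
  simp only [mem_ofPred_eq, V]
  rw [← sub_div, sub_sub_sub_cancel_right, abs_div, abs_of_pos hQ, div_le_iff₀ hQ,
    one_div_mul_eq_div]

theorem statement12 (θ Q K : ℝ) (hθ0 : 0 < θ) (hθ1 : θ < 1) (hQ : 0 < Q) (hK : 1 ≤ K)
    (Ω : Type) [MeasureSpace Ω] (hprob : IsProbabilityMeasure (ℙ : Measure Ω))
    (X : Ω → ℝ) (hX : Measurable X)
    (htail : ∀ t : ℝ, 0 < t →
      ℙ {ω | t * Q < |X ω - ∫ ω', X ω'|} ≤ ENNReal.ofReal (Real.exp (1 - t ^ θ)))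
    (xstar : ℝ) (hx1 : 1 ≤ xstar) (hxK : xstar ≤ K)
    (heq : ℙ {ω | xstar * Q < |X ω - ∫ ω', X ω'|} = ENNReal.ofReal (Real.exp (1 - xstar ^ θ)))
    (δ : ℝ) (hδ0 : 0 < δ) (hδ1 : δ < (1 / 2) * Real.exp (1 - K ^ θ))
    (hδint : (∫ t in Set.Ioi (0 : ℝ), min δ (Real.exp (1 - t ^ θ))) <
      (1 / 3) * Real.exp (1 - K ^ θ)) :
    ∀ y : ℝ, ℙ {ω | |X ω - y| ≤ Q / 3} ≤ ENNReal.ofReal (1 - δ) :=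
  statement12_general θ Q K hθ0 hQ Ω hprob X hX htail xstar hx1 hxK heq δ hδ1 hδint
end

section
/- Let θ ∈ (0,1) and v > 0. There exists ε > 0, depending only on θ and v, such that for every real random variable Z with 𝔼Z = 0, Var(Z) ≥ v, and ℙ(|Z| > t) ≤ exp(1 − t^θ) for all t > 0, one has ℙ(Z ≥ ε) ≥ ε. -/
open MeasureTheory ProbabilityTheory Real Set
open scoped ProbabilityTheory

/-!
The tail bound controls all moments uniformly in `Z`: by the layer-cake formula
`𝔼|Z|^p ≤ p ∫₀^∞ t^(p-1) e^(1-t^θ) dt = p e Γ(p/θ) / θ`. With `𝔼|Z|³ ≤ M₃`, integrating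
`z² ≤ A|z| + |z|³/A` for `A = 2M₃/v` gives `𝔼|Z| ≥ v²/(4M₃)`, and centring gives
`𝔼Z⁺ = 𝔼|Z|/2`. Integrating `z⁺ ≤ ε + B·1{z ≥ ε} + z²/B` then turns the lower bound on `𝔼Z⁺`
and the upper bound on `𝔼Z²` into a lower bound on `ℙ(Z ≥ ε)`.
-/

def HasStretchedExpTail {Ω : Type*} [MeasurableSpace Ω] (μ : Measure Ω) (θ : ℝ) (Z : Ω → ℝ) :
    Prop :=
  ∀ t : ℝ, 0 < t → μ {ω | t < |Z ω|} ≤ ENNReal.ofReal (exp (1 - t ^ θ))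

lemma lintegral_rpow_mul_exp_one_sub_rpow {θ p : ℝ} (hθ : 0 < θ) (hp : 0 < p) :
    ∫⁻ t in Ioi (0 : ℝ), ENNReal.ofReal (t ^ (p - 1) * exp (1 - t ^ θ)) =
      ENNReal.ofReal (exp 1 / θ * Gamma (p / θ)) := by
  have hfun : (fun t : ℝ => t ^ (p - 1) * exp (1 - t ^ θ)) =
      fun t => exp 1 * (t ^ (p - 1) * exp (-t ^ θ)) := by
    ext t; rw [sub_eq_add_neg 1, exp_add]; ring
  rw [← ofReal_integral_eq_lintegral_ofReal, hfun, integral_const_mul,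
    integral_rpow_mul_exp_neg_rpow hθ (by linarith), sub_add_cancel]
  · ring_nf
  · rw [hfun]
    exact (integrableOn_rpow_mul_exp_neg_rpow (by linarith) hθ).const_mul _
  · exact ae_restrict_of_forall_mem measurableSet_Ioi fun t ht =>
      mul_nonneg (rpow_nonneg (le_of_lt ht) _) (exp_pos _).le

noncomputable def tailMomentBound (θ p : ℝ) : ℝ := p * exp 1 / θ * Gamma (p / θ)

lemma tailMomentBound_pos {θ p : ℝ} (hθ : 0 < θ) (hp : 0 < p) : 0 < tailMomentBound θ p := by
  have := Gamma_pos_of_pos (div_pos hp hθ)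
  unfold tailMomentBound
  positivity

section Moments

variable {Ω : Type*} [MeasurableSpace Ω] {μ : Measure Ω} {θ : ℝ} {Z : Ω → ℝ}

lemma HasStretchedExpTail.lintegral_abs_rpow_le (hZ : HasStretchedExpTail μ θ Z)
    (hθ : 0 < θ) (hZm : AEMeasurable Z μ) {p : ℝ} (hp : 0 < p) :
    ∫⁻ ω, ENNReal.ofReal (|Z ω| ^ p) ∂μ ≤ ENNReal.ofReal (tailMomentBound θ p) := by
  calc ∫⁻ ω, ENNReal.ofReal (|Z ω| ^ p) ∂μ
      = ENNReal.ofReal p * ∫⁻ t in Ioi 0, μ {ω | t < |Z ω|} * ENNReal.ofReal (t ^ (p - 1)) :=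
        lintegral_rpow_eq_lintegral_meas_lt_mul μ (ae_of_all _ fun ω => abs_nonneg _)
          hZm.abs hp
    _ ≤ ENNReal.ofReal p * ∫⁻ t in Ioi 0, ENNReal.ofReal (t ^ (p - 1) * exp (1 - t ^ θ)) := by
        refine mul_le_mul_right (setLIntegral_mono' measurableSet_Ioi fun t ht => ?_) _
        rw [mul_comm, ENNReal.ofReal_mul (rpow_nonneg (le_of_lt (mem_Ioi.1 ht)) _)]
        exact mul_le_mul_right (hZ t ht) _
    _ = ENNReal.ofReal (tailMomentBound θ p) := by
        rw [lintegral_rpow_mul_exp_one_sub_rpow hθ hp, ← ENNReal.ofReal_mul hp.le, tailMomentBound]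
        ring_nf

lemma HasStretchedExpTail.integrable_abs_pow (hZ : HasStretchedExpTail μ θ Z)
    (hθ : 0 < θ) (hZm : AEMeasurable Z μ) {n : ℕ} (hn : n ≠ 0) :
    Integrable (fun ω => |Z ω| ^ n) μ := by
  have h := hZ.lintegral_abs_rpow_le hθ hZm (p := n) (by positivity)
  simp only [rpow_natCast] at h
  exact ⟨(hZm.abs.pow_const n).aestronglyMeasurable,
    (hasFiniteIntegral_iff_ofReal (ae_of_all _ fun ω => by positivity)).2
      (h.trans_lt ENNReal.ofReal_lt_top)⟩

lemma HasStretchedExpTail.integral_abs_pow_le (hZ : HasStretchedExpTail μ θ Z)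
    (hθ : 0 < θ) (hZm : AEMeasurable Z μ) {n : ℕ} (hn : n ≠ 0) :
    ∫ ω, |Z ω| ^ n ∂μ ≤ tailMomentBound θ n := by
  have h := hZ.lintegral_abs_rpow_le hθ hZm (p := n) (by positivity)
  simp only [rpow_natCast] at h
  rw [integral_eq_lintegral_of_nonneg_ae (ae_of_all _ fun ω => by positivity)
    (hZm.abs.pow_const n).aestronglyMeasurable]
  exact ENNReal.toReal_le_of_le_ofReal (tailMomentBound_pos hθ (by positivity)).le h

end Moments

lemma pow_succ_le_mul_pow_add_pow_div {x a : ℝ} (hx : 0 ≤ x) (ha : 0 < a) (n : ℕ) :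
    x ^ (n + 1) ≤ a * x ^ n + x ^ (n + 2) / a := by
  rcases le_total x a with hxa | hax
  · have : x ^ (n + 1) ≤ a * x ^ n := by
      rw [pow_succ, mul_comm]; exact mul_le_mul_of_nonneg_right hxa (by positivity)
    linarith [show 0 ≤ x ^ (n + 2) / a by positivity]
  · have : x ^ (n + 1) ≤ x ^ (n + 2) / a := by
      rw [le_div_iff₀ ha, pow_succ x (n + 1)]; exact mul_le_mul_of_nonneg_left hax (by positivity)
    linarith [show 0 ≤ a * x ^ n by positivity]

section Truncation

variable {Ω : Type*} [MeasurableSpace Ω] {μ : Measure Ω} {Z : Ω → ℝ}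

lemma integral_sq_le_mul_integral_abs_add {A : ℝ} (hA : 0 < A) (hZ : Integrable Z μ)
    (hZ3 : Integrable (fun ω => |Z ω| ^ 3) μ) :
    ∫ ω, Z ω ^ 2 ∂μ ≤ A * ∫ ω, |Z ω| ∂μ + (∫ ω, |Z ω| ^ 3 ∂μ) / A := by
  rw [← integral_const_mul, ← integral_div, ← integral_add (hZ.abs.const_mul A) (hZ3.div_const A)]
  refine integral_mono_of_nonneg (ae_of_all _ fun ω => sq_nonneg _)
    ((hZ.abs.const_mul A).add (hZ3.div_const A)) (ae_of_all _ fun ω => ?_)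
  simpa [sq_abs] using pow_succ_le_mul_pow_add_pow_div (abs_nonneg (Z ω)) hA 1

lemma integral_max_zero_eq (hZ : Integrable Z μ) :
    ∫ ω, max (Z ω) 0 ∂μ = ((∫ ω, |Z ω| ∂μ) + ∫ ω, Z ω ∂μ) / 2 := by
  rw [← integral_add hZ.abs hZ, ← integral_div]
  congr 1 with ω
  linarith [max_zero_add_max_neg_zero_eq_abs_self (Z ω), max_zero_sub_max_neg_zero_eq_self (Z ω)]

lemma integral_max_zero_le [IsProbabilityMeasure μ] (hZm : Measurable Z)
    (hZ2 : Integrable (fun ω => Z ω ^ 2) μ) {ε B : ℝ} (hε : 0 ≤ ε) (hB : 0 < B) :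
    ∫ ω, max (Z ω) 0 ∂μ ≤ ε + B * μ.real {ω | ε ≤ Z ω} + (∫ ω, Z ω ^ 2 ∂μ) / B := by
  set S := {ω | ε ≤ Z ω}
  have hS : MeasurableSet S := measurableSet_le measurable_const hZm
  have hind : Integrable (S.indicator fun _ => B) μ := (integrable_const B).indicator hS
  have hstep : Integrable (fun ω => ε + S.indicator (fun _ => B) ω) μ :=
    (integrable_const ε).add hind
  have hrhs : Integrable (fun ω => ε + S.indicator (fun _ => B) ω + Z ω ^ 2 / B) μ :=
    hstep.add (hZ2.div_const B)
  have hpt : ∀ ω, max (Z ω) 0 ≤ ε + S.indicator (fun _ => B) ω + Z ω ^ 2 / B := by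
    intro ω
    have hsq : 0 ≤ Z ω ^ 2 / B := by positivity
    by_cases hω : ω ∈ S
    · have hZω : 0 ≤ Z ω := hε.trans hω
      have := pow_succ_le_mul_pow_add_pow_div hZω hB 0
      rw [Set.indicator_of_mem hω, max_eq_left hZω]
      simp only [zero_add, pow_one, pow_zero, mul_one] at this
      linarith
    · rw [Set.indicator_of_notMem hω]
      have : Z ω < ε := not_le.1 hω
      have := max_le this.le hε
      linarith
  calc ∫ ω, max (Z ω) 0 ∂μ ≤ ∫ ω, (ε + S.indicator (fun _ => B) ω + Z ω ^ 2 / B) ∂μ :=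
        integral_mono_of_nonneg (ae_of_all _ fun ω => le_max_right _ _) hrhs (ae_of_all _ hpt)
    _ = ε + B * μ.real S + (∫ ω, Z ω ^ 2 ∂μ) / B := by
        rw [integral_add hstep (hZ2.div_const B),
          integral_add (integrable_const ε) hind, integral_indicator_const _ hS, integral_div]
        simp [mul_comm]

lemma sq_div_le_integral_max_zero {v M : ℝ} (hv : 0 < v) (hM : 0 < M) (hZ : Integrable Z μ)
    (hZ3 : Integrable (fun ω => |Z ω| ^ 3) μ) (hmean : ∫ ω, Z ω ∂μ = 0)
    (hsecond : v ≤ ∫ ω, Z ω ^ 2 ∂μ) (hthird : ∫ ω, |Z ω| ^ 3 ∂μ ≤ M) :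
    v ^ 2 / (8 * M) ≤ ∫ ω, max (Z ω) 0 ∂μ := by
  set A := 2 * M / v with hA_def
  have hA : 0 < A := by positivity
  have h3 : (∫ ω, |Z ω| ^ 3 ∂μ) / A ≤ v / 2 :=
    calc (∫ ω, |Z ω| ^ 3 ∂μ) / A ≤ M / A := by gcongr
      _ = v / 2 := by rw [hA_def]; field_simp
  have h1 : v / 2 / A ≤ ∫ ω, |Z ω| ∂μ := by
    rw [div_le_iff₀ hA]
    linarith [integral_sq_le_mul_integral_abs_add hA hZ hZ3]
  calc v ^ 2 / (8 * M) = v / 2 / A / 2 := by rw [hA_def]; field_simp; ring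
    _ ≤ ∫ ω, max (Z ω) 0 ∂μ := by rw [integral_max_zero_eq hZ, hmean]; linarith

lemma sq_div_le_measureReal_of_le_integral_max_zero [IsProbabilityMeasure μ]
    (hZm : Measurable Z) (hZ2 : Integrable (fun ω => Z ω ^ 2) μ) {c M ε : ℝ} (hc : 0 < c)
    (hM : 0 < M) (hfirst : c ≤ ∫ ω, max (Z ω) 0 ∂μ) (hsecond : ∫ ω, Z ω ^ 2 ∂μ ≤ M)
    (hε : 0 ≤ ε) (hεc : ε ≤ c / 4) :
    c ^ 2 / (8 * M) ≤ μ.real {ω | ε ≤ Z ω} := by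
  set B := 4 * M / c with hB_def
  have hB : 0 < B := by positivity
  have htrunc := integral_max_zero_le hZm hZ2 hε hB
  have hsecond' : (∫ ω, Z ω ^ 2 ∂μ) / B ≤ c / 4 :=
    calc (∫ ω, Z ω ^ 2 ∂μ) / B ≤ M / B := by gcongr
      _ = c / 4 := by rw [hB_def]; field_simp
  calc c ^ 2 / (8 * M) = c / 2 / B := by rw [hB_def]; field_simp; ring
    _ ≤ μ.real {ω | ε ≤ Z ω} := by rw [div_le_iff₀ hB]; linarith

end Truncation

theorem statement13_general (θ v : ℝ) (hθ0 : 0 < θ) (hv : 0 < v) :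
    ∃ ε : ℝ, 0 < ε ∧
      ∀ (Ω : Type) [MeasureSpace Ω], IsProbabilityMeasure (ℙ : Measure Ω) →
      ∀ Z : Ω → ℝ, Measurable Z →
      (∫ ω, Z ω) = 0 →
      v ≤ ProbabilityTheory.variance Z ℙ →
      (∀ t : ℝ, 0 < t → ℙ {ω | t < |Z ω|} ≤ ENNReal.ofReal (Real.exp (1 - t ^ θ))) →
      ENNReal.ofReal ε ≤ ℙ {ω | ε ≤ Z ω} := by
  have hM₂ : 0 < tailMomentBound θ 2 := tailMomentBound_pos hθ0 two_pos
  have hM₃ : 0 < tailMomentBound θ 3 := tailMomentBound_pos hθ0 three_pos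
  set c := v ^ 2 / (8 * tailMomentBound θ 3)
  have hc : 0 < c := by positivity
  refine ⟨min (c / 4) (c ^ 2 / (8 * tailMomentBound θ 2)), by positivity, ?_⟩
  intro Ω _ _ Z hZm hmean hvar htail
  have htail' : HasStretchedExpTail ℙ θ Z := htail
  have hZ2 := htail'.integrable_abs_pow hθ0 hZm.aemeasurable two_ne_zero
  have hZ3 := htail'.integrable_abs_pow hθ0 hZm.aemeasurable three_ne_zero
  have hZ2_le := htail'.integral_abs_pow_le hθ0 hZm.aemeasurable two_ne_zero
  have hZ3_le := htail'.integral_abs_pow_le hθ0 hZm.aemeasurable three_ne_zero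
  simp only [sq_abs, Nat.cast_ofNat] at hZ2 hZ2_le hZ3_le
  have hZ : Integrable Z :=
    ((memLp_two_iff_integrable_sq hZm.aestronglyMeasurable).2 hZ2).integrable one_le_two
  have hsecond : v ≤ ∫ ω, Z ω ^ 2 :=
    hvar.trans_eq (variance_of_integral_eq_zero hZm.aemeasurable hmean)
  have hfirst := sq_div_le_integral_max_zero hv hM₃ hZ hZ3 hmean hsecond hZ3_le
  have hmass := sq_div_le_measureReal_of_le_integral_max_zero hZm hZ2 hc hM₂ hfirst hZ2_le
    (by positivity) (min_le_left _ (c ^ 2 / (8 * tailMomentBound θ 2)))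
  rw [← ofReal_measureReal]
  exact ENNReal.ofReal_le_ofReal ((min_le_right _ _).trans hmass)

theorem statement13 (θ v : ℝ) (hθ0 : 0 < θ) (hθ1 : θ < 1) (hv : 0 < v) :
    ∃ ε : ℝ, 0 < ε ∧
      ∀ (Ω : Type) [MeasureSpace Ω], IsProbabilityMeasure (ℙ : Measure Ω) →
      ∀ Z : Ω → ℝ, Measurable Z →
      (∫ ω, Z ω) = 0 →
      v ≤ ProbabilityTheory.variance Z ℙ →
      (∀ t : ℝ, 0 < t → ℙ {ω | t < |Z ω|} ≤ ENNReal.ofReal (Real.exp (1 - t ^ θ))) →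
      ENNReal.ofReal ε ≤ ℙ {ω | ε ≤ Z ω} :=
  statement13_general θ v hθ0 hv
end
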